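/- arXiv:math/0607056 — 9 statements merged into one kernel-verified Lean document; each statement's English description precedes it below -/
import Mathlib

section
/- The function H is convex on ℝ, and for every y ∈ ℝ the right-hand derivative of H at y exists and equals G(y) − 1. -/
open MeasureTheory Filter Set Topology

/-- `H` is convex on ℝ and for every `y` its right-hand derivative at `y`
exists and equals `G y - 1`. -/
theorem stmt_1
    (G : ℝ → ℝ) (ystar : ℝ)
    (hmono : Monotone G)
    (hrc : ∀ y, ContinuousWithinAt G (Set.Ici y) y)
    (hG0 : ∀ y, 0 ≤ G y) (hG1 : ∀ y, G y ≤ 1)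
    (hstar : ∀ y, G y = 1 ↔ ystar ≤ y)
    (H : ℝ → ℝ)
    (hH : ∀ y, H y = ∫ η in Set.Ioc y ystar, (1 - G η)) :
    ConvexOn ℝ Set.univ H ∧
    (∀ y : ℝ, HasDerivWithinAt H (G y - 1) (Set.Ici y) y) := by
  have hmono' : Monotone (fun η => G η - 1) := fun a b hab => by
    simpa using hmono hab
  have hInt : ∀ a b : ℝ, IntervalIntegrable (fun η => G η - 1) volume a b :=
    fun a b => hmono'.intervalIntegrable
  -- H as an interval integral from ystar
  have hH' : ∀ y, H y = ∫ η in ystar..y, (G η - 1) := by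
    intro y
    rcases le_or_gt y ystar with h | h
    · rw [hH y, intervalIntegral.integral_symm,
        intervalIntegral.integral_of_le h]
      rw [← MeasureTheory.integral_neg]
      simp
    · rw [hH y]
      have h1 : Set.Ioc y ystar = (∅ : Set ℝ) := Set.Ioc_eq_empty (not_lt.mpr h.le)
      rw [h1, intervalIntegral.integral_of_le h.le]
      rw [MeasureTheory.setIntegral_congr_fun measurableSet_Ioc
        (f := fun η => G η - 1) (g := fun _ => (0:ℝ))
        (fun η hη => by simp [((hstar η).mpr hη.1.le)])]
      simp
  have hdiff : ∀ a b : ℝ, H b - H a = ∫ η in a..b, (G η - 1) := by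
    intro a b
    rw [hH' a, hH' b, ← intervalIntegral.integral_add_adjacent_intervals
      (hInt ystar a) (hInt a b)]
    ring
  constructor
  · apply convexOn_of_slope_mono_adjacent convex_univ
    intro x y z _ _ hxy hyz
    rw [hdiff x y, hdiff y z]
    have h1 : (∫ η in x..y, (G η - 1)) ≤ (y - x) * G y - (y - x) := by
      have := intervalIntegral.integral_mono_on hxy.le (hInt x y)
        (intervalIntegrable_const (c := G y - 1))
        (fun η hη => by simpa using hmono hη.2)
      simpa using this
    have h2 : (z - y) * G y ≤ (∫ η in y..z, (G η - 1)) + (z - y) := by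
      have := intervalIntegral.integral_mono_on hyz.le
        (intervalIntegrable_const (c := G y - 1)) (hInt y z)
        (fun η hη => by simpa using hmono hη.1)
      simpa using this
    rw [div_le_div_iff₀ (by linarith) (by linarith)]
    nlinarith
  · intro y
    have hmeas : StronglyMeasurableAtFilter (fun η => G η - 1) (𝓝[Set.Ioi y] y) volume :=
      ⟨Set.univ, Filter.univ_mem,
        ((hmono'.measurable).stronglyMeasurable).aestronglyMeasurable⟩
    have hcont : ContinuousWithinAt (fun η => G η - 1) (Set.Ioi y) y :=
      ((hrc y).sub continuousWithinAt_const).mono Set.Ioi_subset_Ici_self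
    have := intervalIntegral.integral_hasDerivWithinAt_right (hInt ystar y)
      (s := Set.Ici y) (t := Set.Ioi y) hmeas hcont
    exact this.congr (fun u _ => (hH' u)) (hH' y)
end

section
/- The inverse function H⁻¹ is continuous, strictly decreasing and convex on [0, ∞), and it is uniformly continuous on [0, ∞). If in addition G(y) → 0 as y → −∞, then for every ε > 0 there exists c ≥ 0 such that H⁻¹ is (1 + ε)-Lipschitz on [c, ∞). -/
/-!
On `(-∞, y*]`, `H y = ∫_y^{y*} (1 - G)` integrates an antitone integrand that is positive below
`y*`, so `H` is strictly decreasing and convex there, with `H a - H b ≥ (b - a) (1 - G b)` for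
`a ≤ b`. Hence its inverse is strictly decreasing and convex; convexity gives continuity on
`(0, ∞)`, and monotonicity together with surjectivity onto `(-∞, y*]` gives continuity at `0`.
A decreasing convex function drops the most over intervals at the left end of its domain, so
continuity at `0` upgrades to uniform continuity. Finally, the difference-quotient bound makes
`H⁻¹` a `1 / (1 - G y₀)`-Lipschitz function on `[H y₀, ∞)`, and this constant is at most `1 + ε`
once `y₀` is far enough to the left.
-/

open MeasureTheory Filter Set

open scoped NNReal Topology

section InverseFunction

variable {f g : ℝ → ℝ} {s t : Set ℝ}

theorem AntitoneOn.strictAntiOn_of_rightInvOn (hf : AntitoneOn f s) (hmaps : MapsTo g t s)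
    (hinv : RightInvOn g f t) : StrictAntiOn g t := by
  intro x hx y hy hxy
  by_contra! hle
  have := hf (hmaps hx) (hmaps hy) hle
  rw [hinv hx, hinv hy] at this
  linarith

theorem ConvexOn.convexOn_of_rightInvOn (hf : ConvexOn ℝ s f) (hanti : StrictAntiOn f s)
    (ht : Convex ℝ t) (hmaps : MapsTo g t s) (hinv : RightInvOn g f t) : ConvexOn ℝ t g := by
  refine ⟨ht, fun x hx y hy a b ha hb hab => ?_⟩
  have hcomb : a • g x + b • g y ∈ s := hf.1 (hmaps hx) (hmaps hy) ha hb hab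
  have hp : a • x + b • y ∈ t := ht hx hy ha hb hab
  rw [← hanti.le_iff_ge hcomb (hmaps hp), hinv hp]
  simpa only [hinv hx, hinv hy] using hf.2 (hmaps hx) (hmaps hy) ha hb hab

theorem LipschitzOnWith.of_rightInvOn {K : ℝ≥0}
    (hf : ∀ a ∈ s, ∀ b ∈ s, dist a b ≤ K * dist (f a) (f b)) (hmaps : MapsTo g t s)
    (hinv : RightInvOn g f t) : LipschitzOnWith K g t :=
  LipschitzOnWith.of_dist_le_mul fun x hx y hy => by
    simpa only [hinv hx, hinv hy] using hf _ (hmaps hx) _ (hmaps hy)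

theorem StrictAntiOn.continuousWithinAt_right_of_surjOn {a : ℝ} (hf : StrictAntiOn f s)
    (hs : s ∈ 𝓝[≥] a) (hfs : SurjOn f s (Iio (f a))) : ContinuousWithinAt f (Ici a) a := by
  have hneg : ContinuousWithinAt (-f) (Ici a) a := by
    refine hf.neg.continuousWithinAt_right_of_surjOn hs fun w hw => ?_
    obtain ⟨x, hx, hfx⟩ := hfs (show -w < f a from neg_lt.1 hw)
    exact ⟨x, hx, by simp [hfx]⟩
  simpa using hneg.neg

end InverseFunction

section Convex

variable {f : ℝ → ℝ} {s : Set ℝ}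

theorem ConvexOn.map_add_map_le_of_mem_Icc (hf : ConvexOn ℝ s f) {a b x : ℝ} (ha : a ∈ s)
    (hb : b ∈ s) (hx : x ∈ Icc a b) : f x + f (a + b - x) ≤ f a + f b := by
  rcases hx.1.eq_or_lt with rfl | hax
  · simp
  rcases hx.2.eq_or_lt with rfl | hxb
  · simp [add_comm]
  have h₁ := hf.secant_mono_aux1 ha hb hax hxb
  have h₂ := hf.secant_mono_aux1 ha hb (x := a) (y := a + b - x) (by linarith) (by linarith)
  refine le_of_mul_le_mul_left ?_ (sub_pos.2 (hax.trans hxb))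
  linarith

theorem ConvexOn.uniformContinuousOn_Ici {a : ℝ} (hf : ConvexOn ℝ (Ici a) f)
    (hanti : AntitoneOn f (Ici a)) (hcont : ContinuousWithinAt f (Ici a) a) :
    UniformContinuousOn f (Ici a) := by
  rw [Metric.uniformContinuousOn_iff]
  intro ε hε
  obtain ⟨δ, hδ, hδa⟩ := Metric.continuousWithinAt_iff.1 hcont ε hε
  -- By convexity `f` drops at most as much on `[x, z]` as on `[a, a + (z - x)]`.
  have key : ∀ {x z}, x ∈ Ici a → x ≤ z → dist x z < δ → dist (f x) (f z) < ε := by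
    intro x z hx hxz hdist
    have hz : z ∈ Ici a := le_trans hx hxz
    have hh : a + z - x ∈ Ici a := by simp only [mem_Ici]; linarith
    have hsum := hf.map_add_map_le_of_mem_Icc (x := x) self_mem_Ici hz ⟨hx, hxz⟩
    have hdrop : f a - f (a + z - x) < ε := (le_abs_self _).trans_lt <| by
      rw [← Real.dist_eq, dist_comm]
      refine hδa hh (lt_of_eq_of_lt ?_ hdist)
      rw [Real.dist_eq, Real.dist_eq, abs_sub_comm x z]
      ring_nf
    rw [Real.dist_eq, abs_of_nonneg (sub_nonneg.2 (hanti hx hz hxz))]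
    linarith
  refine ⟨δ, hδ, fun x hx z hz hxz => ?_⟩
  rcases le_total x z with h | h
  · exact key hx h hxz
  · exact dist_comm (f x) (f z) ▸ key hz h (dist_comm x z ▸ hxz)

end Convex

noncomputable def tailIntegral (f : ℝ → ℝ) (c y : ℝ) : ℝ := ∫ x in y..c, f x

section TailIntegral

variable {f : ℝ → ℝ} {c : ℝ}

@[simp]
theorem tailIntegral_self : tailIntegral f c c = 0 :=
  intervalIntegral.integral_same

theorem Antitone.tailIntegral_sub_tailIntegral (hf : Antitone f) (a b : ℝ) :
    tailIntegral f c a - tailIntegral f c b = ∫ x in a..b, f x := by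
  rw [tailIntegral, tailIntegral, ← intervalIntegral.integral_add_adjacent_intervals
    hf.intervalIntegrable hf.intervalIntegrable]
  ring

theorem Antitone.mul_le_intervalIntegral (hf : Antitone f) {a b : ℝ} (hab : a ≤ b) :
    (b - a) * f b ≤ ∫ x in a..b, f x := by
  simpa using intervalIntegral.integral_mono_on hab intervalIntegrable_const
    (hf.intervalIntegrable (μ := volume)) fun x hx => hf hx.2

theorem Antitone.intervalIntegral_le_mul (hf : Antitone f) {a b : ℝ} (hab : a ≤ b) :
    ∫ x in a..b, f x ≤ (b - a) * f a := by
  simpa using intervalIntegral.integral_mono_on hab (hf.intervalIntegrable (μ := volume))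
    intervalIntegrable_const fun x hx => hf hx.1

theorem Antitone.convexOn_tailIntegral (hf : Antitone f) :
    ConvexOn ℝ univ (tailIntegral f c) := by
  refine convexOn_of_slope_mono_adjacent convex_univ fun {x y z} _ _ hxy hyz => ?_
  have hleft := hf.mul_le_intervalIntegral hxy.le
  have hright := hf.intervalIntegral_le_mul hyz.le
  rw [← hf.tailIntegral_sub_tailIntegral (c := c)] at hleft hright
  calc (tailIntegral f c y - tailIntegral f c x) / (y - x) ≤ -f y := by
        rw [div_le_iff₀ (sub_pos.2 hxy)]; linarith
    _ ≤ (tailIntegral f c z - tailIntegral f c y) / (z - y) := by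
        rw [le_div_iff₀ (sub_pos.2 hyz)]; linarith

theorem Antitone.strictAntiOn_tailIntegral (hf : Antitone f) (hpos : ∀ x < c, 0 < f x) :
    StrictAntiOn (tailIntegral f c) (Iic c) := fun a _ b hb hab => by
  have := intervalIntegral.intervalIntegral_pos_of_pos_on hf.intervalIntegrable
    (fun x hx => hpos x (hx.2.trans_le hb)) hab
  rw [← hf.tailIntegral_sub_tailIntegral (c := c)] at this
  linarith

theorem Antitone.dist_le_mul_dist_tailIntegral (hf : Antitone f) {y₀ : ℝ} {K : ℝ≥0}
    (hK : 1 ≤ K * f y₀) {a b : ℝ} (ha : a ≤ y₀) (hb : b ≤ y₀) :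
    dist a b ≤ K * dist (tailIntegral f c a) (tailIntegral f c b) := by
  wlog hab : a ≤ b generalizing a b
  · rw [dist_comm, dist_comm (tailIntegral f c a)]
    exact this hb ha (le_of_not_ge hab)
  have hint := hf.mul_le_intervalIntegral hab
  rw [← hf.tailIntegral_sub_tailIntegral (c := c)] at hint
  have hK0 : (0 : ℝ) ≤ K := K.2
  have hfy₀ : 0 < f y₀ := by
    by_contra! h
    linarith [mul_nonpos_of_nonneg_of_nonpos hK0 h]
  have hlow : (b - a) * f y₀ ≤ tailIntegral f c a - tailIntegral f c b :=
    (mul_le_mul_of_nonneg_left (hf hb) (sub_nonneg.2 hab)).trans hint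
  rw [Real.dist_eq, Real.dist_eq, abs_sub_comm, abs_of_nonneg (sub_nonneg.2 hab),
    abs_of_nonneg ((mul_nonneg (sub_nonneg.2 hab) hfy₀.le).trans hlow)]
  calc b - a ≤ (b - a) * (K * f y₀) := le_mul_of_one_le_right (sub_nonneg.2 hab) hK
    _ = K * ((b - a) * f y₀) := by ring
    _ ≤ K * (tailIntegral f c a - tailIntegral f c b) := mul_le_mul_of_nonneg_left hlow hK0

end TailIntegral

section InverseTailIntegral

variable {f g : ℝ → ℝ} {c : ℝ}

theorem Antitone.mapsTo_tailIntegral (hf : Antitone f) (hpos : ∀ x < c, 0 < f x) :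
    MapsTo (tailIntegral f c) (Iic c) (Ici 0) := fun y hy => by
  simpa using (hf.strictAntiOn_tailIntegral hpos).antitoneOn hy (mem_Iic.2 le_rfl) hy

theorem Antitone.continuousWithinAt_zero_inv_tailIntegral (hf : Antitone f)
    (hpos : ∀ x < c, 0 < f x) (hanti : StrictAntiOn g (Ici 0))
    (hleft : LeftInvOn g (tailIntegral f c) (Iic c)) : ContinuousWithinAt g (Ici 0) 0 := by
  have hg0 : g 0 = c := by simpa using hleft (mem_Iic.2 le_rfl)
  refine hanti.continuousWithinAt_right_of_surjOn self_mem_nhdsWithin fun w hw => ?_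
  rw [hg0] at hw
  exact ⟨tailIntegral f c w, hf.mapsTo_tailIntegral hpos (Iio_subset_Iic_self hw),
    hleft (Iio_subset_Iic_self hw)⟩

theorem Antitone.lipschitzOnWith_inv_tailIntegral (hf : Antitone f) (hpos : ∀ x < c, 0 < f x)
    (hmaps : MapsTo g (Ici 0) (Iic c)) (hright : RightInvOn g (tailIntegral f c) (Ici 0))
    (hleft : LeftInvOn g (tailIntegral f c) (Iic c)) {y₀ : ℝ} (hy₀ : y₀ ≤ c) {K : ℝ≥0}
    (hK : 1 ≤ K * f y₀) : LipschitzOnWith K g (Ici (tailIntegral f c y₀)) := by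
  have hF₀ : 0 ≤ tailIntegral f c y₀ := hf.mapsTo_tailIntegral hpos hy₀
  have hanti := ((hf.strictAntiOn_tailIntegral hpos).antitoneOn.strictAntiOn_of_rightInvOn
    hmaps hright).antitoneOn
  have hmaps₀ : MapsTo g (Ici (tailIntegral f c y₀)) (Iic y₀) := fun z hz =>
    mem_Iic.2 <| by simpa only [hleft hy₀] using hanti hF₀ (hF₀.trans hz) hz
  exact .of_rightInvOn (fun a ha b hb => hf.dist_le_mul_dist_tailIntegral hK ha hb) hmaps₀
    fun z hz => hright (hF₀.trans hz)

end InverseTailIntegral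

theorem stmt_2_general
    (G : ℝ → ℝ) (ystar : ℝ)
    (hmono : Monotone G)
    (hG1 : ∀ y, G y ≤ 1)
    (hstar : ∀ y, G y = 1 ↔ ystar ≤ y)
    (H : ℝ → ℝ)
    (hH : ∀ y, H y = ∫ η in Set.Ioc y ystar, (1 - G η))
    (Hinv : ℝ → ℝ)
    (hinv_mem : ∀ z, 0 ≤ z → Hinv z ≤ ystar)
    (hinv_right : ∀ z, 0 ≤ z → H (Hinv z) = z)
    (hinv_left : ∀ y, y ≤ ystar → Hinv (H y) = y) :
    ContinuousOn Hinv (Set.Ici 0) ∧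
    StrictAntiOn Hinv (Set.Ici 0) ∧
    ConvexOn ℝ (Set.Ici 0) Hinv ∧
    UniformContinuousOn Hinv (Set.Ici 0) ∧
    (Filter.Tendsto G Filter.atBot (nhds 0) →
      ∀ ε : ℝ, 0 < ε → ∃ c : ℝ, 0 ≤ c ∧
        LipschitzOnWith (Real.toNNReal (1 + ε)) Hinv (Set.Ici c)) := by
  set F := tailIntegral (fun η => 1 - G η) ystar
  have hf : Antitone fun η => 1 - G η := fun a b hab => sub_le_sub_left (hmono hab) 1
  have hpos : ∀ η < ystar, 0 < 1 - G η := fun η hη =>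
    sub_pos.2 ((hG1 η).lt_of_ne fun h => ((hstar η).1 h).not_gt hη)
  have hHF : EqOn H F (Iic ystar) := fun y hy => by
    rw [hH]
    exact (intervalIntegral.integral_of_le hy).symm
  have hright : RightInvOn Hinv F (Ici 0) := fun z hz =>
    (hHF (hinv_mem z hz)).symm.trans (hinv_right z hz)
  have hleft : LeftInvOn Hinv F (Iic ystar) := fun y hy => by
    simpa only [hHF hy] using hinv_left y hy
  have hFanti := hf.strictAntiOn_tailIntegral hpos
  have hanti := hFanti.antitoneOn.strictAntiOn_of_rightInvOn hinv_mem hright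
  have hconv := (hf.convexOn_tailIntegral.subset (subset_univ _) (convex_Iic ystar)
    ).convexOn_of_rightInvOn hFanti (convex_Ici 0) hinv_mem hright
  have hcont0 := hf.continuousWithinAt_zero_inv_tailIntegral hpos hanti hleft
  refine ⟨hconv.continuousOn_Ici hcont0, hanti, hconv,
    hconv.uniformContinuousOn_Ici hanti.antitoneOn hcont0, fun hG ε hε => ?_⟩
  obtain ⟨y₀, hy₀G, hy₀⟩ := ((hG.eventually_lt_const (by positivity : 0 < ε / (1 + ε))).and
    (eventually_le_atBot ystar)).exists
  refine ⟨F y₀, hf.mapsTo_tailIntegral hpos hy₀,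
    hf.lipschitzOnWith_inv_tailIntegral hpos hinv_mem hright hleft hy₀ ?_⟩
  rw [Real.coe_toNNReal _ (by linarith)]
  rw [lt_div_iff₀ (by linarith)] at hy₀G
  linarith

/-- `H⁻¹` is continuous, strictly decreasing, convex and uniformly continuous
on `[0, ∞)`; if moreover `G(y) → 0` as `y → -∞`, then for every `ε > 0` there is `c ≥ 0`
such that `H⁻¹` is `(1 + ε)`-Lipschitz on `[c, ∞)`. -/
theorem stmt_2
    (G : ℝ → ℝ) (ystar : ℝ)
    (hmono : Monotone G)
    (hrc : ∀ y, ContinuousWithinAt G (Set.Ici y) y)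
    (hG0 : ∀ y, 0 ≤ G y) (hG1 : ∀ y, G y ≤ 1)
    (hstar : ∀ y, G y = 1 ↔ ystar ≤ y)
    (H : ℝ → ℝ)
    (hH : ∀ y, H y = ∫ η in Set.Ioc y ystar, (1 - G η))
    (Hinv : ℝ → ℝ)
    (hinv_mem : ∀ z, 0 ≤ z → Hinv z ≤ ystar)
    (hinv_right : ∀ z, 0 ≤ z → H (Hinv z) = z)
    (hinv_left : ∀ y, y ≤ ystar → Hinv (H y) = y) :
    ContinuousOn Hinv (Set.Ici 0) ∧
    StrictAntiOn Hinv (Set.Ici 0) ∧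
    ConvexOn ℝ (Set.Ici 0) Hinv ∧
    UniformContinuousOn Hinv (Set.Ici 0) ∧
    (Filter.Tendsto G Filter.atBot (nhds 0) →
      ∀ ε : ℝ, 0 < ε → ∃ c : ℝ, 0 ≤ c ∧
        LipschitzOnWith (Real.toNNReal (1 + ε)) Hinv (Set.Ici c)) :=
  stmt_2_general G ystar hmono hG1 hstar H hH Hinv hinv_mem hinv_right hinv_left
end

section
/- For every z > 0, the left-hand derivative of H⁻¹ at z exists and equals 1/(G(H⁻¹(z)) − 1). -/
/-!
Writing `H y = ∫ η in y..y*, (1 - G η)`, the fundamental theorem of calculus and the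
right-continuity of `G` give `H` the right derivative `G y₀ - 1 ≠ 0` at `y₀ = H⁻¹ z < y*`.
Since `H` is antitone and `H⁻¹` inverts it on both sides, `H⁻¹` is continuous from the left
at `z` and approaches `y₀` from the right, so the one-sided inverse function rule gives the
left derivative `(G y₀ - 1)⁻¹`.
-/

open MeasureTheory Filter Set Topology

theorem HasDerivWithinAt.of_local_left_inverse {𝕜 : Type*} [NontriviallyNormedField 𝕜]
    {f g : 𝕜 → 𝕜} {f' a : 𝕜} {s t : Set 𝕜}
    (hg : Tendsto g (𝓝[s] a) (𝓝[t] (g a))) (hf : HasDerivWithinAt f f' t (g a)) (hf' : f' ≠ 0)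
    (ha : a ∈ s) (hfg : ∀ᶠ x in 𝓝[s] a, f (g x) = x) :
    HasDerivWithinAt g f'⁻¹ s a :=
  HasFDerivWithinAt.of_local_left_inverse
    (f' := ContinuousLinearEquiv.unitsEquivAut 𝕜 (Units.mk0 f' hf')) hg hf ha hfg

theorem setIntegral_Ioc_eq_intervalIntegral_of_eqOn_Ici {E : Type*} [NormedAddCommGroup E]
    [NormedSpace ℝ E] {f : ℝ → E} {c : ℝ} (hf : EqOn f 0 (Ici c)) (y : ℝ) :
    ∫ t in Ioc y c, f t = ∫ t in y..c, f t := by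
  rcases le_total y c with h | h
  · exact (intervalIntegral.integral_of_le h).symm
  · rw [Ioc_eq_empty (not_lt.2 h), Measure.restrict_empty, integral_zero_measure,
      intervalIntegral.integral_symm, intervalIntegral.integral_of_le h,
      setIntegral_eq_zero_of_forall_eq_zero fun t ht => hf ht.1.le, neg_zero]

theorem antitone_intervalIntegral_lower {f : ℝ → ℝ} {μ : Measure ℝ} (hf : ∀ x, 0 ≤ f x)
    (hint : ∀ a b, IntervalIntegrable f μ a b) (c : ℝ) :
    Antitone fun u => ∫ t in u..c, f t ∂μ := by
  intro a b hab
  have hsplit := intervalIntegral.integral_add_adjacent_intervals (hint a b) (hint b c)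
  have hnonneg := intervalIntegral.integral_nonneg (μ := μ) hab fun t _ => hf t
  dsimp only
  linarith

theorem Antitone.antitoneOn_of_leftInvOn {α β : Type*} [PartialOrder α] [LinearOrder β]
    {f : β → α} {g : α → β} {s : Set α}
    (hf : Antitone f) (hfg : LeftInvOn f g s) : AntitoneOn g s := by
  intro x hx x' hx' hxx'
  by_contra! h
  have hx'x : x' ≤ x := hfg hx' ▸ hfg hx ▸ hf h.le
  exact h.ne (congrArg g (le_antisymm hxx' hx'x))

section OrderTopology

variable {α β : Type*} [LinearOrder α] [TopologicalSpace α] [OrderTopology α]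
  [LinearOrder β] [TopologicalSpace β] [OrderTopology β] [DenselyOrdered β]

theorem continuousWithinAt_left_of_antitoneOn_of_image_mem_nhdsWithin {f : α → β} {s : Set α}
    {a : α} (h_anti : AntitoneOn f s) (hs : s ∈ 𝓝[≤] a) (hfs : f '' s ∈ 𝓝[≥] f a) :
    ContinuousWithinAt f (Iic a) a :=
  continuousWithinAt_left_of_monotoneOn_of_image_mem_nhdsWithin (β := βᵒᵈ) h_anti.dual_right hs hfs

theorem Antitone.tendsto_nhdsLE_nhdsGE_of_leftInvOn {H : β → α} {g : α → β} {a z : α} {b : β}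
    (hH : Antitone H) (ha : a < z) (hb : g z < b) (hHb : a ≤ H b) (hHg : LeftInvOn H g (Icc a z))
    (hgH : LeftInvOn g H (Icc (g z) b)) :
    Tendsto g (𝓝[≤] z) (𝓝[≥] g z) := by
  have hdomain : Icc a z ∈ 𝓝[≤] z := Icc_mem_nhdsLE ha
  have hg_anti : AntitoneOn g (Icc a z) := hH.antitoneOn_of_leftInvOn hHg
  have himage : Icc (g z) b ⊆ g '' Icc a z := fun y hy =>
    ⟨H y, ⟨hHb.trans (hH hy.2), hHg ⟨ha.le, le_rfl⟩ ▸ hH hy.1⟩, hgH hy⟩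
  have hcont : ContinuousWithinAt g (Iic z) z :=
    continuousWithinAt_left_of_antitoneOn_of_image_mem_nhdsWithin hg_anti hdomain
      (mem_of_superset (Icc_mem_nhdsGE hb) himage)
  exact tendsto_nhdsWithin_iff.2
    ⟨hcont, by filter_upwards [hdomain] with x hx using hg_anti hx ⟨ha.le, le_rfl⟩ hx.2⟩

end OrderTopology

theorem stmt_3_general
    (G : ℝ → ℝ) (ystar : ℝ)
    (hmono : Monotone G)
    (hrc : ∀ y, ContinuousWithinAt G (Set.Ici y) y)
    (hG1 : ∀ y, G y ≤ 1)
    (hstar : ∀ y, G y = 1 ↔ ystar ≤ y)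
    (H : ℝ → ℝ)
    (hH : ∀ y, H y = ∫ η in Set.Ioc y ystar, (1 - G η))
    (Hinv : ℝ → ℝ)
    (hinv_right : ∀ z, 0 ≤ z → H (Hinv z) = z)
    (hinv_left : ∀ y, y ≤ ystar → Hinv (H y) = y) :
    ∀ z : ℝ, 0 < z →
      HasDerivWithinAt Hinv (1 / (G (Hinv z) - 1)) (Set.Iic z) z := by
  intro z hz
  have hint : ∀ a b, IntervalIntegrable (fun t => 1 - G t) volume a b := fun a b =>
    intervalIntegrable_const.sub hmono.intervalIntegrable
  have hH_eq : H = fun y => ∫ t in y..ystar, (1 - G t) := funext fun y =>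
    (hH y).trans <| setIntegral_Ioc_eq_intervalIntegral_of_eqOn_Ici
      (fun t ht => by simp [(hstar t).2 ht]) y
  have hH_anti : Antitone H :=
    hH_eq ▸ antitone_intervalIntegral_lower (fun t => sub_nonneg.2 (hG1 t)) hint ystar
  have hHinv_lt : Hinv z < ystar := by
    by_contra! h
    have := hinv_right z hz.le
    rw [hH, Ioc_eq_empty (not_lt.2 h), Measure.restrict_empty, integral_zero_measure] at this
    exact hz.ne this
  have hG_lt : G (Hinv z) < 1 := (hG1 _).lt_of_ne fun h => hHinv_lt.not_ge ((hstar _).1 h)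
  have htendsto : Tendsto Hinv (𝓝[≤] z) (𝓝[≥] Hinv z) :=
    hH_anti.tendsto_nhdsLE_nhdsGE_of_leftInvOn hz hHinv_lt (by simp [hH])
      (fun x hx => hinv_right x hx.1) (fun y hy => hinv_left y hy.2)
  have hderiv : HasDerivWithinAt H (G (Hinv z) - 1) (Ici (Hinv z)) (Hinv z) := by
    rw [hH_eq, ← neg_sub]
    exact intervalIntegral.integral_hasDerivWithinAt_left (t := Ioi (Hinv z)) (hint _ ystar)
      (measurable_const.sub hmono.measurable).stronglyMeasurable.stronglyMeasurableAtFilter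
      ((continuousWithinAt_const.sub (hrc _)).mono Ioi_subset_Ici_self)
  rw [one_div]
  exact hderiv.of_local_left_inverse htendsto (sub_ne_zero.2 hG_lt.ne) self_mem_Iic
    (by filter_upwards [Icc_mem_nhdsLE hz] with x hx using hinv_right x hx.1)

/-- for every `z > 0` the left-hand derivative of `H⁻¹` at `z` exists and
equals `1 / (G(H⁻¹(z)) - 1)`. -/
theorem stmt_3
    (G : ℝ → ℝ) (ystar : ℝ)
    (hmono : Monotone G)
    (hrc : ∀ y, ContinuousWithinAt G (Set.Ici y) y)
    (hG0 : ∀ y, 0 ≤ G y) (hG1 : ∀ y, G y ≤ 1)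
    (hstar : ∀ y, G y = 1 ↔ ystar ≤ y)
    (H : ℝ → ℝ)
    (hH : ∀ y, H y = ∫ η in Set.Ioc y ystar, (1 - G η))
    (Hinv : ℝ → ℝ)
    (hinv_mem : ∀ z, 0 ≤ z → Hinv z ≤ ystar)
    (hinv_right : ∀ z, 0 ≤ z → H (Hinv z) = z)
    (hinv_left : ∀ y, y ≤ ystar → Hinv (H y) = y) :
    ∀ z : ℝ, 0 < z →
      HasDerivWithinAt Hinv (1 / (G (Hinv z) - 1)) (Set.Iic z) z :=
  stmt_3_general G ystar hmono hrc hG1 hstar H hH Hinv hinv_right hinv_left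
end

section
/- For all p = (s₁, y₁) and q = (s₂, y₂) in [0, ∞) × ℝ one has |K(q, q) − K(p, q)| ≤ √2 · λ(1/μ² + β²) · ‖p − q‖ and, consequently, K(p, p) − 2K(p, q) + K(q, q) ≤ 2√2 · λ(1/μ² + β²) · ‖p − q‖, where ‖·‖ denotes the Euclidean norm on ℝ². -/
open MeasureTheory

/-!
Write `K(p, q) = λ ∫₀^{min(s₁,s₂)} k(min(y₁,y₂), max(y₁,y₂), x) dx` with
`k(a, b, x) = (c G(a + x) + d)(1 - G(b + x))`, `c = 1/μ²`, `d = β²`, so that `0 ≤ k ≤ c + d`.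
Passing from `K(q, q)` to `K(p, q)` shortens the interval of integration by at most `|s₁ - s₂|`,
costing at most `(c + d)|s₁ - s₂|`, and spreads the arguments of `k` from `(y₂, y₂)` to
`(min, max)`. Since `G` is monotone, the second change costs pointwise at most
`(c + d)(G(max + x) - G(min + x))`, whose integral telescopes to at most `|y₁ - y₂|` because
`0 ≤ G ≤ 1`. Hence `0 ≤ K(q, q) - K(p, q) ≤ λ(c + d)‖p - q‖₁ ≤ √2 λ(c + d)‖p - q‖₂`, and the
second inequality is the sum of this bound and its mirror image under `p ↔ q`.
-/

namespace MonotoneKernel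

variable {G : ℝ → ℝ} {c d : ℝ}

noncomputable def integrand (G : ℝ → ℝ) (c d a b x : ℝ) : ℝ :=
  (c * G (a + x) + d) * (1 - G (b + x))

noncomputable def kernel (G : ℝ → ℝ) (c d : ℝ) (p q : ℝ × ℝ) : ℝ :=
  ∫ x in (0 : ℝ)..min p.1 q.1, integrand G c d (min p.2 q.2) (max p.2 q.2) x

lemma kernel_comm (p q : ℝ × ℝ) : kernel G c d p q = kernel G c d q p := by
  simp only [kernel, min_comm, max_comm]

lemma integrand_nonneg (hG0 : ∀ y, 0 ≤ G y) (hG1 : ∀ y, G y ≤ 1) (hc : 0 ≤ c) (hd : 0 ≤ d)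
    (a b x : ℝ) : 0 ≤ integrand G c d a b x :=
  mul_nonneg (by have := hG0 (a + x); positivity) (sub_nonneg.2 (hG1 (b + x)))

lemma integrand_le (hG0 : ∀ y, 0 ≤ G y) (hG1 : ∀ y, G y ≤ 1) (hc : 0 ≤ c) (hd : 0 ≤ d)
    (a b x : ℝ) : integrand G c d a b x ≤ c + d := by
  have hcG : c * G (a + x) ≤ c := mul_le_of_le_one_right hc (hG1 (a + x))
  calc integrand G c d a b x ≤ (c * G (a + x) + d) * 1 :=
        mul_le_mul_of_nonneg_left (by linarith [hG0 (b + x)])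
          (by have := hG0 (a + x); positivity)
    _ ≤ c + d := by linarith

lemma integrand_intervalIntegrable (hmono : Monotone G) (hG0 : ∀ y, 0 ≤ G y)
    (hG1 : ∀ y, G y ≤ 1) (hc : 0 ≤ c) (hd : 0 ≤ d) (a b u v : ℝ) :
    IntervalIntegrable (integrand G c d a b) volume u v := by
  have hG := hmono.measurable
  have hmeas : Measurable (integrand G c d a b) := by unfold integrand; fun_prop
  refine (intervalIntegrable_const (c := c + d)).mono_fun' hmeas.aestronglyMeasurable
    (ae_of_all _ fun x => ?_)
  dsimp only
  rw [Real.norm_of_nonneg (integrand_nonneg hG0 hG1 hc hd a b x)]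
  exact integrand_le hG0 hG1 hc hd a b x

lemma integrand_self_sub_bounds (hmono : Monotone G) (hG0 : ∀ y, 0 ≤ G y)
    (hG1 : ∀ y, G y ≤ 1) (hc : 0 ≤ c) (hd : 0 ≤ d) {m y M : ℝ} (hmy : m ≤ y) (hyM : y ≤ M)
    (x : ℝ) :
    0 ≤ integrand G c d y y x - integrand G c d m M x ∧
      integrand G c d y y x - integrand G c d m M x ≤ (c + d) * (G (M + x) - G (m + x)) := by
  set u := G (m + x)
  set w := G (y + x)
  set v := G (M + x)
  have huw : u ≤ w := hmono (by linarith)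
  have hwv : w ≤ v := hmono (by linarith)
  have hu0 : 0 ≤ u := hG0 _
  have hv1 : v ≤ 1 := hG1 _
  have hsplit : integrand G c d y y x - integrand G c d m M x
      = c * (w - u) * (1 - w) + (c * u + d) * (v - w) := by
    simp only [integrand]; ring
  rw [hsplit]
  constructor
  · have : 0 ≤ c * u + d := by positivity
    have : 0 ≤ 1 - w := by linarith
    have : 0 ≤ w - u := by linarith
    have : 0 ≤ v - w := by linarith
    positivity
  · have h1 : c * (w - u) * (1 - w) ≤ c * (w - u) :=
      mul_le_of_le_one_right (mul_nonneg hc (by linarith)) (by linarith)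
    have h2 : (c * u + d) * (v - w) ≤ (c + d) * (v - w) :=
      mul_le_mul_of_nonneg_right (by nlinarith) (by linarith)
    nlinarith

lemma integral_comp_add_sub_comp_add_le (hmono : Monotone G) (hG0 : ∀ y, 0 ≤ G y)
    (hG1 : ∀ y, G y ≤ 1) {m M T : ℝ} (hmM : m ≤ M) :
    ∫ x in (0 : ℝ)..T, (G (M + x) - G (m + x)) ≤ M - m := by
  have hint : ∀ u v : ℝ, IntervalIntegrable G volume u v := fun _ _ => hmono.intervalIntegrable
  have htranslate : ∀ a : ℝ, Monotone fun x => G (a + x) :=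
    fun a _ _ h => hmono (by linarith)
  -- the integral telescopes to `∫_{m+T}^{M+T} G - ∫_m^M G`
  rw [intervalIntegral.integral_sub (htranslate M).intervalIntegrable
      (htranslate m).intervalIntegrable,
    intervalIntegral.integral_comp_add_left, intervalIntegral.integral_comp_add_left,
    add_zero, add_zero,
    intervalIntegral.integral_interval_sub_interval_comm' (hint _ _) (hint _ _) (hint _ _)]
  have hupper : ∫ x in (m + T)..(M + T), G x ≤ M - m := by
    calc ∫ x in (m + T)..(M + T), G x ≤ ∫ _ in (m + T)..(M + T), (1 : ℝ) :=
          intervalIntegral.integral_mono_on (by linarith) (hint _ _) intervalIntegrable_const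
            fun x _ => hG1 x
      _ = M - m := by simp
  have hlower : 0 ≤ ∫ x in m..M, G x := intervalIntegral.integral_nonneg hmM fun x _ => hG0 x
  linarith

lemma kernel_self_sub_bounds (hmono : Monotone G) (hG0 : ∀ y, 0 ≤ G y) (hG1 : ∀ y, G y ≤ 1)
    (hc : 0 ≤ c) (hd : 0 ≤ d) {p q : ℝ × ℝ} (hp : 0 ≤ p.1) (hq : 0 ≤ q.1) :
    0 ≤ kernel G c d q q - kernel G c d p q ∧
      kernel G c d q q - kernel G c d p q ≤ (c + d) * (|p.1 - q.1| + |p.2 - q.2|) := by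
  obtain ⟨s₁, y₁⟩ := p
  obtain ⟨s₂, y₂⟩ := q
  dsimp only at hp hq ⊢
  set T := min s₁ s₂
  set m := min y₁ y₂
  set M := max y₁ y₂
  have hTs : T ≤ s₂ := min_le_right _ _
  have hT0 : 0 ≤ T := le_min hp hq
  have hmy : m ≤ y₂ := min_le_right _ _
  have hyM : y₂ ≤ M := le_max_right _ _
  have hint : ∀ a b u v : ℝ, IntervalIntegrable (integrand G c d a b) volume u v :=
    integrand_intervalIntegrable hmono hG0 hG1 hc hd
  have hsplit : kernel G c d (s₂, y₂) (s₂, y₂) - kernel G c d (s₁, y₁) (s₂, y₂)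
      = (∫ x in T..s₂, integrand G c d y₂ y₂ x)
        + ∫ x in (0 : ℝ)..T, (integrand G c d y₂ y₂ x - integrand G c d m M x) := by
    simp only [kernel, min_self, max_self]
    rw [intervalIntegral.integral_sub (hint _ _ _ _) (hint _ _ _ _),
      ← intervalIntegral.integral_add_adjacent_intervals (hint _ _ 0 T) (hint _ _ T s₂)]
    ring
  have htail_nonneg : 0 ≤ ∫ x in T..s₂, integrand G c d y₂ y₂ x :=
    intervalIntegral.integral_nonneg hTs fun x _ => integrand_nonneg hG0 hG1 hc hd _ _ x
  have htail_le : ∫ x in T..s₂, integrand G c d y₂ y₂ x ≤ (c + d) * |s₁ - s₂| := by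
    calc ∫ x in T..s₂, integrand G c d y₂ y₂ x ≤ ∫ _ in T..s₂, (c + d) :=
          intervalIntegral.integral_mono_on hTs (hint _ _ _ _) intervalIntegrable_const
            fun x _ => integrand_le hG0 hG1 hc hd _ _ x
      _ ≤ (c + d) * |s₁ - s₂| := by
          rw [intervalIntegral.integral_const, smul_eq_mul, mul_comm]
          refine mul_le_mul_of_nonneg_left ?_ (by positivity)
          rcases le_total s₁ s₂ with h | h
          · simp only [T, min_eq_left h]; linarith [neg_abs_le (s₁ - s₂)]
          · simp only [T, min_eq_right h]; linarith [abs_nonneg (s₁ - s₂)]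
  have hbounds := fun x => integrand_self_sub_bounds hmono hG0 hG1 hc hd hmy hyM x
  have hmid_nonneg :
      0 ≤ ∫ x in (0 : ℝ)..T, (integrand G c d y₂ y₂ x - integrand G c d m M x) :=
    intervalIntegral.integral_nonneg hT0 fun x _ => (hbounds x).1
  have hmid_le : ∫ x in (0 : ℝ)..T, (integrand G c d y₂ y₂ x - integrand G c d m M x)
      ≤ (c + d) * |y₁ - y₂| := by
    have hGdiff : IntervalIntegrable (fun x => G (M + x) - G (m + x)) volume 0 T :=
      (hmono.comp (monotone_id.const_add M)).intervalIntegrable.sub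
        (hmono.comp (monotone_id.const_add m)).intervalIntegrable
    calc ∫ x in (0 : ℝ)..T, (integrand G c d y₂ y₂ x - integrand G c d m M x)
        ≤ ∫ x in (0 : ℝ)..T, (c + d) * (G (M + x) - G (m + x)) :=
          intervalIntegral.integral_mono_on hT0 ((hint _ _ _ _).sub (hint _ _ _ _))
            (hGdiff.const_mul _) fun x _ => (hbounds x).2
      _ = (c + d) * ∫ x in (0 : ℝ)..T, (G (M + x) - G (m + x)) :=
          intervalIntegral.integral_const_mul _ _
      _ ≤ (c + d) * (M - m) := mul_le_mul_of_nonneg_left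
          (integral_comp_add_sub_comp_add_le hmono hG0 hG1 (hmy.trans hyM)) (by positivity)
      _ = (c + d) * |y₁ - y₂| := by rw [max_sub_min_eq_abs, abs_sub_comm]
  rw [hsplit]
  constructor <;> linarith

end MonotoneKernel

lemma abs_add_abs_le_sqrt_two_mul_sqrt (a b : ℝ) :
    |a| + |b| ≤ Real.sqrt 2 * Real.sqrt (a ^ 2 + b ^ 2) := by
  rw [← Real.sqrt_mul zero_le_two, ← sq_abs a, ← sq_abs b]
  exact Real.le_sqrt_of_sq_le (add_sq_le)

open MonotoneKernel in
theorem stmt_8_general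
    (G : ℝ → ℝ) (hmono : Monotone G)
    (hG0 : ∀ y, 0 ≤ G y) (hG1 : ∀ y, G y ≤ 1)
    (lam mu beta : ℝ) (hlam : 0 < lam)
    (K : ℝ × ℝ → ℝ × ℝ → ℝ)
    (hK : ∀ p q : ℝ × ℝ, K p q = lam * ∫ x in (0 : ℝ)..(min p.1 q.1),
        ((1 / mu ^ 2) * G (min p.2 q.2 + x) + beta ^ 2) * (1 - G (max p.2 q.2 + x))) :
    ∀ p q : ℝ × ℝ, 0 ≤ p.1 → 0 ≤ q.1 →
      |K q q - K p q| ≤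
          Real.sqrt 2 * (lam * (1 / mu ^ 2 + beta ^ 2)) *
            Real.sqrt ((p.1 - q.1) ^ 2 + (p.2 - q.2) ^ 2) ∧
      K p p - 2 * K p q + K q q ≤
          2 * Real.sqrt 2 * (lam * (1 / mu ^ 2 + beta ^ 2)) *
            Real.sqrt ((p.1 - q.1) ^ 2 + (p.2 - q.2) ^ 2) := by
  intro p q hp hq
  have hK' : ∀ p q, K p q = lam * kernel G (1 / mu ^ 2) (beta ^ 2) p q := hK
  set C := 1 / mu ^ 2 + beta ^ 2
  set dist := Real.sqrt ((p.1 - q.1) ^ 2 + (p.2 - q.2) ^ 2)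
  have hbound : lam * (C * (|p.1 - q.1| + |p.2 - q.2|)) ≤ Real.sqrt 2 * (lam * C) * dist := by
    have := abs_add_abs_le_sqrt_two_mul_sqrt (p.1 - q.1) (p.2 - q.2)
    have : 0 ≤ lam * C := by positivity
    nlinarith
  have hqp := kernel_self_sub_bounds hmono hG0 hG1 (c := 1 / mu ^ 2) (d := beta ^ 2)
    (by positivity) (sq_nonneg _) hp hq
  have hpq := kernel_self_sub_bounds hmono hG0 hG1 (c := 1 / mu ^ 2) (d := beta ^ 2)
    (by positivity) (sq_nonneg _) hq hp
  rw [abs_sub_comm q.1, abs_sub_comm q.2, kernel_comm q p] at hpq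
  simp only [hK', ← mul_sub, abs_mul, abs_of_pos hlam, abs_of_nonneg hqp.1]
  constructor
  · exact (mul_le_mul_of_nonneg_left hqp.2 hlam.le).trans hbound
  · linarith [mul_le_mul_of_nonneg_left hpq.2 hlam.le, mul_le_mul_of_nonneg_left hqp.2 hlam.le]

/-- for `p = (s₁, y₁)`, `q = (s₂, y₂)` in `[0, ∞) × ℝ`,
`|K(q,q) - K(p,q)| ≤ √2·λ(1/μ² + β²)·‖p - q‖` and hence
`K(p,p) - 2K(p,q) + K(q,q) ≤ 2√2·λ(1/μ² + β²)·‖p - q‖` (Euclidean norm on ℝ²). -/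
theorem stmt_8
    (G : ℝ → ℝ) (hmono : Monotone G)
    (hG0 : ∀ y, 0 ≤ G y) (hG1 : ∀ y, G y ≤ 1)
    (lam mu beta : ℝ) (hlam : 0 < lam) (hmu : 0 < mu) (hbeta : 0 ≤ beta)
    (K : ℝ × ℝ → ℝ × ℝ → ℝ)
    (hK : ∀ p q : ℝ × ℝ, K p q = lam * ∫ x in (0 : ℝ)..(min p.1 q.1),
        ((1 / mu ^ 2) * G (min p.2 q.2 + x) + beta ^ 2) * (1 - G (max p.2 q.2 + x))) :
    ∀ p q : ℝ × ℝ, 0 ≤ p.1 → 0 ≤ q.1 →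
      |K q q - K p q| ≤
          Real.sqrt 2 * (lam * (1 / mu ^ 2 + beta ^ 2)) *
            Real.sqrt ((p.1 - q.1) ^ 2 + (p.2 - q.2) ^ 2) ∧
      K p p - 2 * K p q + K q q ≤
          2 * Real.sqrt 2 * (lam * (1 / mu ^ 2 + beta ^ 2)) *
            Real.sqrt ((p.1 - q.1) ^ 2 + (p.2 - q.2) ^ 2) :=
  stmt_8_general G hmono hG0 hG1 lam mu beta hlam K hK
end

section
/- Let G : ℝ → ℝ be a nondecreasing function with 0 ≤ G(y) ≤ 1 for all y, let y₁, y₂ ∈ ℝ and s > 0, and let (λₙ), (μₙ), (βₙ) be sequences of reals with λₙ → λ > 0, μₙ → μ > 0, βₙ → β and βₙ ≥ 0. Then lim_{n→∞} (1/√n) · Σ_{j=1}^{⌊λₙ s √n⌋} [(1/μₙ²)·G(y₁ + j/(λₙ√n)) + βₙ²]·[1 − G(y₂ + j/(λₙ√n))] = λ ∫_0^s ((1/μ²)·G(y₁ + x) + β²)·(1 − G(y₂ + x)) dx. -/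
/-!
With `cₙ = λₙ√n`, the sum times `1/cₙ` is exactly the integral over `(0, ⌊s cₙ⌋/cₙ]` of the step
function `y ↦ Fₙ(⌈y cₙ⌉/cₙ)`, where `Fₙ` is the summand as a function of `j/cₙ`. Since `cₙ → ∞`,
the grid points `⌈y cₙ⌉/cₙ` tend to `y`, and at every continuity point of `G(y₁ + ·)` and
`G(y₂ + ·)` the step functions converge to the limiting integrand. A monotone function has only
countably many discontinuities, so this is convergence almost everywhere, and `0 ≤ G ≤ 1` gives a
uniform bound; dominated convergence finishes the proof.
-/

open MeasureTheory Filter Set Topology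

lemma natCeil_mul_eq_of_mem_Ioc {c x : ℝ} (hc : 0 < c) {i : ℕ}
    (hx : x ∈ Ioc (i / c) ((i + 1 : ℕ) / c)) : ⌈x * c⌉₊ = i + 1 := by
  rw [Nat.ceil_eq_iff i.succ_ne_zero, Nat.succ_sub_one, ← div_lt_iff₀ hc, ← le_div_iff₀ hc]
  exact hx

lemma tendsto_indicator_Ioc_comp_natCeil {M : Type*} [TopologicalSpace M] [Zero M]
    {F : ℕ → ℝ → M} {f : ℝ → M} {c : ℕ → ℝ} {s x : ℝ}
    (hc : Tendsto c atTop atTop) (hs : 0 ≤ s) (hxs : x ≠ s)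
    (hF : x ∈ Ioo 0 s → Tendsto (Function.uncurry F) (atTop ×ˢ 𝓝 x) (𝓝 (f x))) :
    Tendsto (fun n => (Ioc 0 (⌊s * c n⌋₊ / c n)).indicator (fun y => F n (⌈y * c n⌉₊ / c n)) x)
      atTop (𝓝 ((Ioc 0 s).indicator f x)) := by
  have hT : Tendsto (fun n => (⌊s * c n⌋₊ : ℝ) / c n) atTop (𝓝 s) :=
    (tendsto_nat_floor_mul_div_atTop hs).comp hc
  rcases le_or_gt x 0 with hx0 | hx0
  · simp [indicator_of_notMem, hx0.not_gt, tendsto_const_nhds]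
  rcases hxs.lt_or_gt with hxs | hxs
  · rw [indicator_of_mem (show x ∈ Ioc 0 s from ⟨hx0, hxs.le⟩)]
    have hgrid : Tendsto (fun n => (⌈x * c n⌉₊ : ℝ) / c n) atTop (𝓝 x) :=
      (tendsto_nat_ceil_mul_div_atTop hx0.le).comp hc
    refine ((hF ⟨hx0, hxs⟩).comp (tendsto_id.prodMk hgrid)).congr' ?_
    filter_upwards [hT.eventually (eventually_gt_nhds hxs)] with n hn
    rw [indicator_of_mem (show x ∈ Ioc 0 _ from ⟨hx0, hn.le⟩)]
    rfl
  · rw [indicator_of_notMem fun h => hxs.not_ge h.2]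
    refine tendsto_const_nhds.congr' ?_
    filter_upwards [hT.eventually (eventually_lt_nhds hxs)] with n hn
    rw [indicator_of_notMem fun h => hn.not_ge h.2]

section RiemannSum

variable {E : Type*} [NormedAddCommGroup E] [NormedSpace ℝ E] [CompleteSpace E]

lemma integral_comp_natCeil_mul_div (f : ℝ → E) {c : ℝ} (hc : 0 < c) (N : ℕ) :
    ∫ x in (0 : ℝ)..N / c, f (⌈x * c⌉₊ / c) = c⁻¹ • ∑ j ∈ Finset.Icc 1 N, f (j / c) := by
  have hpiece (i : ℕ) :
      ∀ x ∈ uIoc ((i : ℝ) / c) ((i + 1 : ℕ) / c), f (⌈x * c⌉₊ / c) = f ((i + 1 : ℕ) / c) := by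
    intro x hx
    rw [uIoc_of_le (by gcongr; omega)] at hx
    rw [natCeil_mul_eq_of_mem_Ioc hc hx, Nat.cast_add_one]
  have hpiece_integral (i : ℕ) : ∫ x in (i / c : ℝ)..((i + 1 : ℕ) / c), f (⌈x * c⌉₊ / c) =
      c⁻¹ • f ((i + 1 : ℕ) / c) := by
    rw [intervalIntegral.integral_congr_ae (ae_of_all _ (hpiece i)),
      intervalIntegral.integral_const]
    congr 1
    push_cast
    field_simp
    ring
  have hadjacent := intervalIntegral.sum_integral_adjacent_intervals
    (a := fun i : ℕ => (i : ℝ) / c) (n := N) (μ := volume)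
    fun i _ => intervalIntegrable_const.congr fun x hx => (hpiece i x hx).symm
  simp only [Nat.cast_zero, zero_div] at hadjacent
  rw [← hadjacent, Finset.smul_sum, Finset.sum_congr rfl fun i _ => hpiece_integral i,
    Finset.range_eq_Ico, Finset.sum_Ico_add' (fun j : ℕ => c⁻¹ • f (j / c)), zero_add,
    ← Finset.Ico_add_one_right_eq_Icc]

theorem tendsto_smul_sum_natFloor_of_tendsto_uncurry
    {F : ℕ → ℝ → E} {f : ℝ → E} {c : ℕ → ℝ} {s C : ℝ}
    (hc : Tendsto c atTop atTop) (hs : 0 ≤ s) (hbound : ∀ᶠ n in atTop, ∀ y, ‖F n y‖ ≤ C)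
    (hF : ∀ᵐ x, x ∈ Ioo 0 s → Tendsto (Function.uncurry F) (atTop ×ˢ 𝓝 x) (𝓝 (f x))) :
    Tendsto (fun n => (c n)⁻¹ • ∑ j ∈ Finset.Icc 1 ⌊s * c n⌋₊, F n (j / c n)) atTop
      (𝓝 (∫ x in 0..s, f x)) := by
  set h := fun n => (Ioc 0 (⌊s * c n⌋₊ / c n)).indicator fun y => F n (⌈y * c n⌉₊ / c n)
  have hsum : ∀ᶠ n in atTop,
      ∫ x, h n x = (c n)⁻¹ • ∑ j ∈ Finset.Icc 1 ⌊s * c n⌋₊, F n (j / c n) := by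
    filter_upwards [hc.eventually_gt_atTop 0] with n hn
    rw [integral_indicator measurableSet_Ioc, ← intervalIntegral.integral_of_le (by positivity),
      integral_comp_natCeil_mul_div _ hn]
  have hlim : ∫ x, (Ioc 0 s).indicator f x = ∫ x in 0..s, f x := by
    rw [integral_indicator measurableSet_Ioc, intervalIntegral.integral_of_le hs]
  rw [← hlim]
  refine (tendsto_integral_filter_of_dominated_convergence ((Ioc 0 s).indicator fun _ => C)
    ?_ ?_ ?_ ?_).congr' hsum
  · refine Eventually.of_forall fun n => ?_
    exact (((StronglyMeasurable.of_discrete (f := fun k : ℕ => F n (k / c n))).comp_measurable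
      (Nat.measurable_ceil.comp (measurable_id.mul_const (c n)))).indicator
        measurableSet_Ioc).aestronglyMeasurable
  · filter_upwards [hbound, hc.eventually_gt_atTop 0] with n hn hcn
    refine ae_of_all _ fun x => ?_
    have hC : 0 ≤ C := (norm_nonneg _).trans (hn 0)
    rw [norm_indicator_eq_indicator_norm]
    calc _ ≤ (Ioc 0 (⌊s * c n⌋₊ / c n)).indicator (fun _ => C) x :=
          indicator_le_indicator (hn _)
      _ ≤ (Ioc 0 s).indicator (fun _ => C) x := by
          refine indicator_le_indicator_of_subset (Ioc_subset_Ioc_right ?_) (fun _ => hC) x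
          rw [div_le_iff₀ hcn]
          exact Nat.floor_le (by positivity)
  · exact (integrable_indicator_iff measurableSet_Ioc).2 (integrableOn_const measure_Ioc_lt_top.ne)
  · filter_upwards [hF, (countable_singleton s).ae_notMem volume] with x hx hxs
    exact tendsto_indicator_Ioc_comp_natCeil hc hs hxs hx

end RiemannSum

lemma abs_mul_one_sub_le {a b u v : ℝ} (ha : 0 ≤ a) (hu₀ : 0 ≤ u) (hu₁ : u ≤ 1)
    (hv₀ : 0 ≤ v) (hv₁ : v ≤ 1) : |(a * u + b ^ 2) * (1 - v)| ≤ a + b ^ 2 := by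
  have hau : a * u ≤ a := mul_le_of_le_one_right ha hu₁
  rw [abs_of_nonneg (by positivity)]
  nlinarith [mul_nonneg (by positivity : 0 ≤ a * u + b ^ 2) hv₀]

theorem stmt_9_general
    (G : ℝ → ℝ) (hmono : Monotone G)
    (hG0 : ∀ y, 0 ≤ G y) (hG1 : ∀ y, G y ≤ 1)
    (y₁ y₂ s : ℝ) (hs : 0 < s)
    (lam mu beta : ℕ → ℝ) (l m b : ℝ)
    (hlam : Filter.Tendsto lam Filter.atTop (nhds l)) (hl : 0 < l)
    (hmu : Filter.Tendsto mu Filter.atTop (nhds m)) (hm : 0 < m)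
    (hbeta : Filter.Tendsto beta Filter.atTop (nhds b)) :
    Filter.Tendsto
      (fun n : ℕ => (1 / Real.sqrt n) *
        ∑ j ∈ Finset.Icc 1 ⌊lam n * s * Real.sqrt n⌋₊,
          ((1 / (mu n) ^ 2) * G (y₁ + (j : ℝ) / (lam n * Real.sqrt n)) + (beta n) ^ 2) *
            (1 - G (y₂ + (j : ℝ) / (lam n * Real.sqrt n))))
      Filter.atTop
      (nhds (l * ∫ x in (0 : ℝ)..s,
        ((1 / m ^ 2) * G (y₁ + x) + b ^ 2) * (1 - G (y₂ + x)))) := by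
  set F : ℕ → ℝ → ℝ := fun n y => ((1 / mu n ^ 2) * G (y₁ + y) + beta n ^ 2) * (1 - G (y₂ + y))
  have hc : Tendsto (fun n : ℕ => lam n * √n) atTop atTop :=
    hlam.pos_mul_atTop hl (Real.tendsto_sqrt_atTop.comp tendsto_natCast_atTop_atTop)
  have hcoef : Tendsto (fun n => 1 / mu n ^ 2) atTop (𝓝 (1 / m ^ 2)) :=
    tendsto_const_nhds.div (hmu.pow 2) (by positivity)
  have hbound : ∀ᶠ n in atTop, ∀ y, ‖F n y‖ ≤ 1 / m ^ 2 + b ^ 2 + 1 := by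
    filter_upwards [(hcoef.add (hbeta.pow 2)).eventually (eventually_le_nhds (lt_add_one _))]
      with n hn y
    exact (abs_mul_one_sub_le (by positivity) (hG0 _) (hG1 _) (hG0 _) (hG1 _)).trans hn
  have hG₁ : Monotone fun x => G (y₁ + x) := hmono.comp (monotone_id.const_add _)
  have hG₂ : Monotone fun x => G (y₂ + x) := hmono.comp (monotone_id.const_add _)
  have hF : ∀ᵐ x, x ∈ Ioo 0 s → Tendsto (Function.uncurry F) (atTop ×ˢ 𝓝 x)
      (𝓝 (((1 / m ^ 2) * G (y₁ + x) + b ^ 2) * (1 - G (y₂ + x)))) := by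
    filter_upwards [(hG₁.countable_not_continuousAt.union
      hG₂.countable_not_continuousAt).ae_notMem volume] with x hx _
    simp only [mem_union, mem_ofPred_eq, not_or, not_not] at hx
    exact (((hcoef.comp tendsto_fst).mul (hx.1.tendsto.comp tendsto_snd)).add
      ((hbeta.pow 2).comp tendsto_fst)).mul (tendsto_const_nhds.sub (hx.2.tendsto.comp tendsto_snd))
  refine (hlam.mul (tendsto_smul_sum_natFloor_of_tendsto_uncurry hc hs.le hbound hF)).congr' ?_
  filter_upwards [hlam.eventually (eventually_gt_nhds hl), eventually_gt_atTop 0] with n hln hn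
  rw [smul_eq_mul, ← mul_assoc, show lam n * s * √n = s * (lam n * √n) by ring]
  congr 1
  field_simp

/-- Riemann-sum convergence
`(1/√n) Σ_{j=1}^{⌊λₙ s √n⌋} [(1/μₙ²) G(y₁ + j/(λₙ√n)) + βₙ²][1 - G(y₂ + j/(λₙ√n))]
  → λ ∫₀ˢ ((1/μ²) G(y₁+x) + β²)(1 - G(y₂+x)) dx`. -/
theorem stmt_9
    (G : ℝ → ℝ) (hmono : Monotone G)
    (hG0 : ∀ y, 0 ≤ G y) (hG1 : ∀ y, G y ≤ 1)
    (y₁ y₂ s : ℝ) (hs : 0 < s)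
    (lam mu beta : ℕ → ℝ) (l m b : ℝ)
    (hlam : Filter.Tendsto lam Filter.atTop (nhds l)) (hl : 0 < l)
    (hmu : Filter.Tendsto mu Filter.atTop (nhds m)) (hm : 0 < m)
    (hbeta : Filter.Tendsto beta Filter.atTop (nhds b)) (hbnn : ∀ n, 0 ≤ beta n) :
    Filter.Tendsto
      (fun n : ℕ => (1 / Real.sqrt n) *
        ∑ j ∈ Finset.Icc 1 ⌊lam n * s * Real.sqrt n⌋₊,
          ((1 / (mu n) ^ 2) * G (y₁ + (j : ℝ) / (lam n * Real.sqrt n)) + (beta n) ^ 2) *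
            (1 - G (y₂ + (j : ℝ) / (lam n * Real.sqrt n))))
      Filter.atTop
      (nhds (l * ∫ x in (0 : ℝ)..s,
        ((1 / m ^ 2) * G (y₁ + x) + b ^ 2) * (1 - G (y₂ + x)))) :=
  stmt_9_general G hmono hG0 hG1 y₁ y₂ s hs lam mu beta l m b hlam hl hmu hm hbeta
end

section
/- Let T = [a₁, b₁] × [a₂, b₂] be a compact rectangle in ℝ² and let Y be a real-valued stochastic process indexed by T on a probability space such that for all p, q ∈ T the increment Y(p) − Y(q) has a centered Gaussian distribution with variance E[(Y(p) − Y(q))²] ≤ C·‖p − q‖ for a constant C ≥ 0, where ‖·‖ is the Euclidean norm. Then Y admits a modification with continuous sample paths. -/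
/-!
Sixth moments of the Gaussian increments give `P(|Y p - Y q| ≥ ε) ≲ ‖p - q‖³ / ε⁶`. The dyadic grid
of mesh `2⁻ⁿ` has about `4ⁿ` edges, so the probability that some edge of it carries an oscillation
larger than `(9/10)ⁿ` is `≲ (4 · 2⁻³ · (10/9)⁶)ⁿ`, which is summable: by Borel–Cantelli almost every
path is regular on all fine grids. Along such a path the values at the dyadic approximations of a
point converge at a geometric rate, uniformly in the point, so the limit is continuous, and a second
application of Borel–Cantelli at a fixed point identifies the limit with `Y p` almost surely.
An affine change of variables reduces the rectangle to the unit square.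
-/

open MeasureTheory ProbabilityTheory Filter Set
open scoped NNReal ENNReal Topology

lemma integral_pow_two_mul_gaussianReal (v : ℝ≥0) (k : ℕ) :
    ∫ x, x ^ (2 * k) ∂gaussianReal 0 v = v ^ k * ∫ x, x ^ (2 * k) ∂gaussianReal 0 1 := by
  have hscale : (gaussianReal 0 1).map (√v * ·) = gaussianReal 0 v := by
    rw [gaussianReal_map_const_mul]
    congr 1
    · simp
    · ext; simp
  rw [← hscale, integral_map (by fun_prop) (by fun_prop), ← integral_const_mul]
  congr 1 with x
  rw [mul_pow, pow_mul, pow_mul, Real.sq_sqrt v.coe_nonneg]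

lemma gaussianReal_abs_ge_le (v : ℝ≥0) (k : ℕ) {ε : ℝ} (hε : 0 < ε) :
    gaussianReal 0 v {x | ε ≤ |x|} ≤
      ENNReal.ofReal ((∫ x, x ^ (2 * k) ∂gaussianReal 0 1) * v ^ k / ε ^ (2 * k)) := by
  have hint : Integrable (fun x => x ^ (2 * k)) (gaussianReal 0 v) := by
    rcases k.eq_zero_or_pos with rfl | hk
    · simp
    · simpa [pow_mul, sq_abs] using
        (memLp_id_gaussianReal (μ := 0) (v := v) (2 * k : ℕ)).integrable_norm_pow (by omega)
  have hmarkov := mul_meas_ge_le_integral_of_nonneg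
    (ae_of_all _ fun x => (even_two_mul k).pow_nonneg x) hint (ε ^ (2 * k))
  have hsub : {x : ℝ | ε ≤ |x|} ⊆ {x | ε ^ (2 * k) ≤ x ^ (2 * k)} := fun x hx => by
    rw [mem_ofPred_eq, ← (even_two_mul k).pow_abs x]
    exact pow_le_pow_left₀ hε.le hx _
  rw [integral_pow_two_mul_gaussianReal] at hmarkov
  calc gaussianReal 0 v {x | ε ≤ |x|}
      ≤ gaussianReal 0 v {x | ε ^ (2 * k) ≤ x ^ (2 * k)} := measure_mono hsub
    _ = ENNReal.ofReal ((gaussianReal 0 v).real {x | ε ^ (2 * k) ≤ x ^ (2 * k)}) := by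
      rw [measureReal_def, ENNReal.ofReal_toReal (measure_ne_top _ _)]
    _ ≤ _ := by
      gcongr
      rw [le_div_iff₀ (by positivity)]
      linarith

lemma measure_abs_ge_le_of_map_eq_gaussianReal {Ω : Type*} [MeasurableSpace Ω] {μ : Measure Ω}
    {X : Ω → ℝ} (hX : Measurable X) {v : ℝ≥0} (hlaw : μ.map X = gaussianReal 0 v) (k : ℕ)
    {ε : ℝ} (hε : 0 < ε) :
    μ {ω | ε ≤ |X ω|} ≤
      ENNReal.ofReal ((∫ x, x ^ (2 * k) ∂gaussianReal 0 1) * v ^ k / ε ^ (2 * k)) := by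
  have hset : MeasurableSet {x : ℝ | ε ≤ |x|} := measurableSet_le measurable_const measurable_abs
  change μ (X ⁻¹' {x | ε ≤ |x|}) ≤ _
  rw [← Measure.map_apply hX hset, hlaw]
  exact gaussianReal_abs_ge_le v k hε

noncomputable section

abbrev unitSquare : Set (ℝ × ℝ) := Icc 0 1 ×ˢ Icc 0 1

lemma swap_mem_unitSquare {p : ℝ × ℝ} (hp : p ∈ unitSquare) : p.swap ∈ unitSquare :=
  ⟨hp.2, hp.1⟩

def dyadicIndex (n : ℕ) (x : ℝ) : ℕ := ⌊2 ^ n * x⌋₊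

def dyadicPoint (n i j : ℕ) : ℝ × ℝ := (i / 2 ^ n, j / 2 ^ n)

def dyadicProj (n : ℕ) (p : ℝ × ℝ) : ℝ × ℝ :=
  dyadicPoint n (dyadicIndex n p.1) (dyadicIndex n p.2)

section Dyadic

variable {n i j : ℕ} {x y : ℝ}

lemma dyadicIndex_le_mul (hx : 0 ≤ x) : (dyadicIndex n x : ℝ) ≤ 2 ^ n * x :=
  Nat.floor_le (by positivity)

lemma lt_dyadicIndex_add_one : 2 ^ n * x < dyadicIndex n x + 1 :=
  Nat.lt_floor_add_one _

lemma dyadicIndex_le_two_pow (hx : x ≤ 1) : dyadicIndex n x ≤ 2 ^ n := by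
  refine Nat.floor_le_of_le ?_
  push_cast
  nlinarith [pow_pos (two_pos : (0 : ℝ) < 2) n]

lemma dyadicIndex_le_succ_of_sub_le (h : x - y ≤ (1 / 2) ^ n) :
    dyadicIndex n x ≤ dyadicIndex n y + 1 := by
  have hpow : (2 : ℝ) ^ n * (1 / 2) ^ n = 1 := by rw [← mul_pow]; norm_num
  have : 2 ^ n * x < (dyadicIndex n y + 2 : ℕ) := by
    push_cast
    nlinarith [lt_dyadicIndex_add_one (n := n) (x := y), pow_pos (two_pos : (0 : ℝ) < 2) n]
  have := (Nat.floor_lt' (by omega)).mpr this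
  rw [← dyadicIndex] at this
  omega

lemma two_mul_dyadicIndex_le (hx : 0 ≤ x) : 2 * dyadicIndex n x ≤ dyadicIndex (n + 1) x := by
  refine Nat.le_floor ?_
  push_cast
  rw [pow_succ]
  nlinarith [dyadicIndex_le_mul (n := n) hx]

lemma dyadicIndex_succ_le (hx : 0 ≤ x) : dyadicIndex (n + 1) x ≤ 2 * dyadicIndex n x + 1 := by
  have : dyadicIndex (n + 1) x < 2 * dyadicIndex n x + 2 := by
    rw [dyadicIndex, Nat.floor_lt (by positivity)]
    push_cast
    rw [pow_succ]
    nlinarith [lt_dyadicIndex_add_one (n := n) (x := x)]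
  omega

lemma abs_sub_dyadicIndex_div_le (hx : 0 ≤ x) : |dyadicIndex n x / 2 ^ n - x| ≤ (1 / 2) ^ n := by
  have h2 : (0 : ℝ) < 2 ^ n := by positivity
  have hdiff : (dyadicIndex n x : ℝ) / 2 ^ n - x = (dyadicIndex n x - 2 ^ n * x) / 2 ^ n := by
    field_simp
  rw [hdiff, abs_div, abs_of_pos h2, one_div_pow, div_le_div_iff_of_pos_right h2, abs_le]
  constructor <;>
    linarith [dyadicIndex_le_mul (n := n) hx, lt_dyadicIndex_add_one (n := n) (x := x)]

lemma dyadicPoint_mem (hi : i ≤ 2 ^ n) (hj : j ≤ 2 ^ n) : dyadicPoint n i j ∈ unitSquare := by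
  have h2 : (0 : ℝ) < 2 ^ n := by positivity
  have hi' : (i : ℝ) ≤ 2 ^ n := by exact_mod_cast hi
  have hj' : (j : ℝ) ≤ 2 ^ n := by exact_mod_cast hj
  exact ⟨⟨div_nonneg i.cast_nonneg h2.le, (div_le_one h2).2 hi'⟩,
    ⟨div_nonneg j.cast_nonneg h2.le, (div_le_one h2).2 hj'⟩⟩

lemma dyadicPoint_two_mul : dyadicPoint (n + 1) (2 * i) (2 * j) = dyadicPoint n i j := by
  simp only [dyadicPoint, Prod.mk.injEq, pow_succ]
  push_cast
  constructor <;> field_simp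

lemma dist_dyadicPoint_succ_le :
    dist (dyadicPoint n (i + 1) j) (dyadicPoint n i j) ≤ (1 / 2) ^ n := by
  simp [dyadicPoint, Prod.dist_eq, add_div]

lemma dyadicProj_mem {p : ℝ × ℝ} (hp : p ∈ unitSquare) : dyadicProj n p ∈ unitSquare :=
  dyadicPoint_mem (dyadicIndex_le_two_pow hp.1.2) (dyadicIndex_le_two_pow hp.2.2)

lemma dist_dyadicProj_le {p : ℝ × ℝ} (hp : p ∈ unitSquare) :
    dist (dyadicProj n p) p ≤ (1 / 2) ^ n :=
  max_le (abs_sub_dyadicIndex_div_le hp.1.1) (abs_sub_dyadicIndex_div_le hp.2.1)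

end Dyadic

def RowRegular (f : ℝ × ℝ → ℝ) (n : ℕ) (δ : ℝ) : Prop :=
  ∀ i < 2 ^ n, ∀ j ≤ 2 ^ n, |f (dyadicPoint n (i + 1) j) - f (dyadicPoint n i j)| ≤ δ

-- Vertical edges of `f` are the horizontal edges of `f ∘ Prod.swap`.
def GridRegular (f : ℝ × ℝ → ℝ) (n : ℕ) (δ : ℝ) : Prop :=
  RowRegular f n δ ∧ RowRegular (f ∘ Prod.swap) n δ

section GridRegular

variable {f : ℝ × ℝ → ℝ} {n i i' j j' : ℕ} {δ : ℝ}

lemma RowRegular.abs_sub_le (hf : RowRegular f n δ) (hδ : 0 ≤ δ) (hi : i ≤ 2 ^ n)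
    (hi' : i' ≤ 2 ^ n) (hj : j ≤ 2 ^ n) (h₁ : i ≤ i' + 1) (h₂ : i' ≤ i + 1) :
    |f (dyadicPoint n i' j) - f (dyadicPoint n i j)| ≤ δ := by
  rcases (by omega : i' = i ∨ i' = i + 1 ∨ i = i' + 1) with rfl | rfl | rfl
  · simpa using hδ
  · exact hf i (by omega) j hj
  · rw [abs_sub_comm]
    exact hf i' (by omega) j hj

lemma GridRegular.abs_sub_le (hf : GridRegular f n δ) (hδ : 0 ≤ δ) (hi : i ≤ 2 ^ n)
    (hi' : i' ≤ 2 ^ n) (hj : j ≤ 2 ^ n) (hj' : j' ≤ 2 ^ n) (h₁ : i ≤ i' + 1) (h₂ : i' ≤ i + 1)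
    (h₃ : j ≤ j' + 1) (h₄ : j' ≤ j + 1) :
    |f (dyadicPoint n i' j') - f (dyadicPoint n i j)| ≤ 2 * δ := by
  have hcol : |f (dyadicPoint n i' j') - f (dyadicPoint n i' j)| ≤ δ :=
    hf.2.abs_sub_le hδ hj hj' hi' h₃ h₄
  have hrow := hf.1.abs_sub_le hδ hi hi' hj h₁ h₂
  calc _ ≤ |f (dyadicPoint n i' j') - f (dyadicPoint n i' j)|
        + |f (dyadicPoint n i' j) - f (dyadicPoint n i j)| := _root_.abs_sub_le _ _ _
    _ ≤ 2 * δ := by linarith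

lemma GridRegular.abs_dyadicProj_succ_sub_le (hf : GridRegular f (n + 1) δ) (hδ : 0 ≤ δ)
    {p : ℝ × ℝ} (hp : p ∈ unitSquare) :
    |f (dyadicProj (n + 1) p) - f (dyadicProj n p)| ≤ 2 * δ := by
  obtain ⟨⟨hx₀, hx₁⟩, ⟨hy₀, hy₁⟩⟩ := hp
  rw [dyadicProj, dyadicProj, ← dyadicPoint_two_mul (n := n)]
  have := dyadicIndex_le_two_pow (n := n) hx₁
  have := dyadicIndex_le_two_pow (n := n) hy₁
  have := two_mul_dyadicIndex_le (n := n) hx₀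
  have := two_mul_dyadicIndex_le (n := n) hy₀
  have := dyadicIndex_succ_le (n := n) hx₀
  have := dyadicIndex_succ_le (n := n) hy₀
  have : 2 ^ (n + 1) = 2 * 2 ^ n := pow_succ' 2 n
  refine hf.abs_sub_le hδ ?_ (dyadicIndex_le_two_pow hx₁) ?_ (dyadicIndex_le_two_pow hy₁)
    ?_ ?_ ?_ ?_ <;> omega

lemma GridRegular.abs_dyadicProj_sub_le (hf : GridRegular f n δ) (hδ : 0 ≤ δ)
    {p q : ℝ × ℝ} (hp : p ∈ unitSquare) (hq : q ∈ unitSquare) (hpq : dist p q ≤ (1 / 2) ^ n) :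
    |f (dyadicProj n q) - f (dyadicProj n p)| ≤ 2 * δ := by
  rw [Prod.dist_eq, max_le_iff, Real.dist_eq, Real.dist_eq, abs_le, abs_le] at hpq
  exact hf.abs_sub_le hδ (dyadicIndex_le_two_pow hp.1.2) (dyadicIndex_le_two_pow hq.1.2)
    (dyadicIndex_le_two_pow hp.2.2) (dyadicIndex_le_two_pow hq.2.2)
    (dyadicIndex_le_succ_of_sub_le (by linarith)) (dyadicIndex_le_succ_of_sub_le (by linarith))
    (dyadicIndex_le_succ_of_sub_le (by linarith)) (dyadicIndex_le_succ_of_sub_le (by linarith))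

end GridRegular

def dyadicLimit (f : ℝ × ℝ → ℝ) (p : ℝ × ℝ) : ℝ :=
  limUnder atTop fun n => f (dyadicProj n p)

section DyadicLimit

variable {f : ℝ × ℝ → ℝ} {N : ℕ} {p : ℝ × ℝ}

lemma dist_dyadicProj_add_succ_le (hf : ∀ n ≥ N, GridRegular f n ((9 / 10) ^ n))
    (hp : p ∈ unitSquare) (k : ℕ) :
    dist (f (dyadicProj (k + N) p)) (f (dyadicProj (k + 1 + N) p)) ≤
      2 * (9 / 10) ^ (N + 1) * (9 / 10) ^ k := by
  rw [dist_comm, Real.dist_eq, add_right_comm]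
  calc _ ≤ 2 * (9 / 10 : ℝ) ^ (k + N + 1) :=
        (hf _ (by omega)).abs_dyadicProj_succ_sub_le (by positivity) hp
    _ = _ := by ring

lemma tendsto_dyadicLimit (hf : ∀ n ≥ N, GridRegular f n ((9 / 10) ^ n)) (hp : p ∈ unitSquare) :
    Tendsto (fun n => f (dyadicProj n p)) atTop (𝓝 (dyadicLimit f p)) := by
  obtain ⟨a, ha⟩ := cauchySeq_tendsto_of_complete
    (cauchySeq_of_le_geometric _ _ (by norm_num) (dist_dyadicProj_add_succ_le hf hp))
  exact tendsto_nhds_limUnder ⟨a, (tendsto_add_atTop_iff_nat N).mp ha⟩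

lemma dist_dyadicLimit_le (hf : ∀ n ≥ N, GridRegular f n ((9 / 10) ^ n)) (hp : p ∈ unitSquare)
    {n : ℕ} (hn : N ≤ n) : dist (f (dyadicProj n p)) (dyadicLimit f p) ≤ 18 * (9 / 10) ^ n := by
  obtain ⟨k, rfl⟩ := Nat.exists_eq_add_of_le' hn
  calc _ ≤ 2 * (9 / 10) ^ (N + 1) * (9 / 10) ^ k / (1 - 9 / 10) :=
        dist_le_of_le_geometric_of_tendsto _ _ (by norm_num) (dist_dyadicProj_add_succ_le hf hp)
          ((tendsto_add_atTop_iff_nat N).mpr (tendsto_dyadicLimit hf hp)) k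
    _ = 18 * (9 / 10) ^ (k + N) := by ring

lemma continuousOn_dyadicLimit (hf : ∀ᶠ n in atTop, GridRegular f n ((9 / 10) ^ n)) :
    ContinuousOn (dyadicLimit f) unitSquare := by
  obtain ⟨N, hN⟩ := eventually_atTop.mp hf
  rw [Metric.continuousOn_iff]
  intro p hp ε hε
  have hsmall := (tendsto_pow_atTop_nhds_zero_of_lt_one (r := (9 / 10 : ℝ)) (by norm_num)
    (by norm_num)).eventually_lt_const (by positivity : 0 < ε / 38)
  obtain ⟨m, hm, hmN⟩ := (hsmall.and (eventually_ge_atTop N)).exists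
  refine ⟨(1 / 2) ^ m, by positivity, fun q hq hqp => ?_⟩
  have hmid := (hN m hmN).abs_dyadicProj_sub_le (by positivity) hp hq (dist_comm p q ▸ hqp.le)
  have hq' := dist_dyadicLimit_le hN hq hmN
  have hp' := dist_dyadicLimit_le hN hp hmN
  rw [Real.dist_eq] at hq' hp' ⊢
  have := abs_sub_le (dyadicLimit f q) (f (dyadicProj m q)) (dyadicLimit f p)
  have := abs_sub_le (f (dyadicProj m q)) (f (dyadicProj m p)) (dyadicLimit f p)
  rw [abs_sub_comm] at hq'
  linarith

end DyadicLimit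

def IncrementTailBound {Ω : Type*} [MeasurableSpace Ω] (Z : ℝ × ℝ → Ω → ℝ) (μ : Measure Ω)
    (M : ℝ) : Prop :=
  ∀ p ∈ unitSquare, ∀ q ∈ unitSquare, ∀ ε > 0,
    μ {ω | ε ≤ |Z p ω - Z q ω|} ≤ ENNReal.ofReal (M * dist p q ^ 3 / ε ^ 6)

def HasContinuousModificationOn {α Ω : Type*} [TopologicalSpace α] [MeasurableSpace Ω]
    (Y : α → Ω → ℝ) (μ : Measure Ω) (S : Set α) : Prop :=
  ∃ Y' : α → Ω → ℝ, (∀ p ∈ S, ∀ᵐ ω ∂μ, Y' p ω = Y p ω) ∧ ∀ ω, ContinuousOn (fun p => Y' p ω) S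

lemma HasContinuousModificationOn.of_comp {α β Ω : Type*} [TopologicalSpace α]
    [TopologicalSpace β] [MeasurableSpace Ω] {μ : Measure Ω} {Y : β → Ω → ℝ} {φ : α → β}
    {ψ : β → α} {S : Set α} {T : Set β}
    (h : HasContinuousModificationOn (fun p => Y (φ p)) μ S) (hψ : ContinuousOn ψ T)
    (hψT : MapsTo ψ T S) (hφψ : ∀ q ∈ T, φ (ψ q) = q) : HasContinuousModificationOn Y μ T := by
  obtain ⟨Y', hae, hcont⟩ := h
  refine ⟨fun q ω => Y' (ψ q) ω, fun q hq => ?_, fun ω => (hcont ω).comp hψ hψT⟩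
  filter_upwards [hae _ (hψT hq)] with ω hω
  rw [hω, hφψ q hq]

lemma tsum_measure_ne_top_of_le_geometric {Ω : Type*} [MeasurableSpace Ω] {μ : Measure Ω}
    {s : ℕ → Set Ω} {C r : ℝ} (hC : 0 ≤ C) (hr₀ : 0 ≤ r) (hr : r < 1)
    (h : ∀ n, μ (s n) ≤ ENNReal.ofReal (C * r ^ n)) : ∑' n, μ (s n) ≠ ∞ := by
  have hsum : Summable fun n => C * r ^ n := (summable_geometric_of_lt_one hr₀ hr).mul_left C
  refine ne_top_of_le_ne_top (ENNReal.ofReal_ne_top (r := ∑' n, C * r ^ n)) ?_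
  rw [ENNReal.ofReal_tsum_of_nonneg (fun n => by positivity) hsum]
  exact ENNReal.tsum_le_tsum h

-- The ratio `9 / 10` of the oscillation thresholds is chosen so that `4 * 125000 / 531441 < 1`.
lemma half_pow_cube_div_pow_six (n : ℕ) :
    ((1 / 2 : ℝ) ^ n) ^ 3 / ((9 / 10) ^ n) ^ 6 = (125000 / 531441) ^ n := by
  rw [← pow_mul, ← pow_mul, mul_comm n, mul_comm n, pow_mul, pow_mul, ← div_pow]
  norm_num

namespace IncrementTailBound

variable {Ω : Type*} [MeasurableSpace Ω] {μ : Measure Ω} {Z : ℝ × ℝ → Ω → ℝ} {M : ℝ}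

lemma comp_swap (h : IncrementTailBound Z μ M) : IncrementTailBound (fun p => Z p.swap) μ M := by
  intro p hp q hq ε hε
  have hdist : dist p.swap q.swap = dist p q := by simp [Prod.dist_eq, max_comm]
  rw [← hdist]
  exact h _ (swap_mem_unitSquare hp) _ (swap_mem_unitSquare hq) ε hε

lemma measure_not_rowRegular_le (h : IncrementTailBound Z μ M) (hM : 0 ≤ M) {δ : ℝ}
    (hδ : 0 < δ) (n : ℕ) :
    μ {ω | ¬ RowRegular (fun p => Z p ω) n δ} ≤
      (2 ^ n * (2 ^ n + 1) : ℕ) * ENNReal.ofReal (M * ((1 / 2) ^ n) ^ 3 / δ ^ 6) := by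
  have hsub : {ω | ¬ RowRegular (fun p => Z p ω) n δ} ⊆
      ⋃ i ∈ Finset.range (2 ^ n), ⋃ j ∈ Finset.range (2 ^ n + 1),
        {ω | δ ≤ |Z (dyadicPoint n (i + 1) j) ω - Z (dyadicPoint n i j) ω|} := by
    intro ω hω
    simp only [RowRegular, not_forall, not_le, mem_ofPred_eq] at hω
    obtain ⟨i, hi, j, hj, hlt⟩ := hω
    simp only [mem_iUnion, Finset.mem_range]
    exact ⟨i, hi, j, by omega, hlt.le⟩
  have hedge : ∀ i < 2 ^ n, ∀ j < 2 ^ n + 1,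
      μ {ω | δ ≤ |Z (dyadicPoint n (i + 1) j) ω - Z (dyadicPoint n i j) ω|} ≤
        ENNReal.ofReal (M * ((1 / 2) ^ n) ^ 3 / δ ^ 6) := fun i hi j hj =>
    (h _ (dyadicPoint_mem hi (by omega)) _ (dyadicPoint_mem hi.le (by omega)) δ hδ).trans
      (by gcongr; exact dist_dyadicPoint_succ_le)
  calc _ ≤ _ := measure_mono hsub
    _ ≤ ∑ i ∈ Finset.range (2 ^ n), ∑ j ∈ Finset.range (2 ^ n + 1),
        ENNReal.ofReal (M * ((1 / 2) ^ n) ^ 3 / δ ^ 6) :=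
      (measure_biUnion_finset_le _ _).trans <| Finset.sum_le_sum fun i hi =>
        (measure_biUnion_finset_le _ _).trans <| Finset.sum_le_sum fun j hj =>
          hedge i (Finset.mem_range.mp hi) j (Finset.mem_range.mp hj)
    _ = _ := by simp [mul_assoc]

lemma measure_not_gridRegular_le (h : IncrementTailBound Z μ M) (hM : 0 ≤ M) (n : ℕ) :
    μ {ω | ¬ GridRegular (fun p => Z p ω) n ((9 / 10) ^ n)} ≤
      ENNReal.ofReal (4 * M * (500000 / 531441) ^ n) := by
  have hsub : {ω | ¬ GridRegular (fun p => Z p ω) n ((9 / 10) ^ n)} ⊆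
      {ω | ¬ RowRegular (fun p => Z p ω) n ((9 / 10) ^ n)} ∪
        {ω | ¬ RowRegular (fun p => Z p.swap ω) n ((9 / 10) ^ n)} := fun ω hω => by
    simp only [GridRegular, not_and_or] at hω
    exact hω
  calc _ ≤ _ := measure_mono hsub
    _ ≤ _ := measure_union_le _ _
    _ ≤ _ := add_le_add (h.measure_not_rowRegular_le hM (by positivity) n)
        (h.comp_swap.measure_not_rowRegular_le hM (by positivity) n)
    _ ≤ _ := by
      rw [← two_mul, ← mul_assoc, show (2 : ℝ≥0∞) * (2 ^ n * (2 ^ n + 1) : ℕ) =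
        ENNReal.ofReal (2 * (2 ^ n * (2 ^ n + 1))) by norm_cast,
        ← ENNReal.ofReal_mul (by positivity), mul_div_assoc, half_pow_cube_div_pow_six]
      refine ENNReal.ofReal_le_ofReal ?_
      have hcount : (2 * (2 ^ n * (2 ^ n + 1)) : ℝ) ≤ 4 * 4 ^ n := by
        have : (4 : ℝ) ^ n = 2 ^ n * 2 ^ n := by rw [← mul_pow]; norm_num
        nlinarith [one_le_pow₀ (M₀ := ℝ) (a := 2) (n := n) (by norm_num)]
      calc _ ≤ 4 * 4 ^ n * (M * (125000 / 531441) ^ n) := by gcongr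
        _ = 4 * M * (4 * (125000 / 531441)) ^ n := by rw [mul_pow]; ring
        _ = _ := by norm_num

lemma ae_eventually_gridRegular (h : IncrementTailBound Z μ M) (hM : 0 ≤ M) :
    ∀ᵐ ω ∂μ, ∀ᶠ n in atTop, GridRegular (fun p => Z p ω) n ((9 / 10) ^ n) := by
  filter_upwards [ae_eventually_notMem (tsum_measure_ne_top_of_le_geometric (by positivity)
    (by norm_num) (by norm_num) (h.measure_not_gridRegular_le hM))] with ω hω
  simpa using hω

lemma ae_tendsto_dyadicProj (h : IncrementTailBound Z μ M) (hM : 0 ≤ M) {p : ℝ × ℝ}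
    (hp : p ∈ unitSquare) :
    ∀ᵐ ω ∂μ, Tendsto (fun n => Z (dyadicProj n p) ω) atTop (𝓝 (Z p ω)) := by
  have hbound : ∀ n, μ {ω | (9 / 10) ^ n ≤ |Z (dyadicProj n p) ω - Z p ω|} ≤
      ENNReal.ofReal (M * (125000 / 531441) ^ n) := fun n => by
    refine (h _ (dyadicProj_mem hp) _ hp _ (by positivity)).trans ?_
    rw [mul_div_assoc, ← half_pow_cube_div_pow_six]
    gcongr
    exact dist_dyadicProj_le hp
  filter_upwards [ae_eventually_notMem (tsum_measure_ne_top_of_le_geometric hM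
    (by norm_num) (by norm_num) hbound)] with ω hω
  rw [tendsto_iff_dist_tendsto_zero]
  refine squeeze_zero' (Eventually.of_forall fun n => dist_nonneg) ?_
    (tendsto_pow_atTop_nhds_zero_of_lt_one (r := (9 / 10 : ℝ)) (by norm_num) (by norm_num))
  filter_upwards [hω] with n hn
  simpa [Real.dist_eq] using (not_le.mp hn).le

theorem hasContinuousModificationOn (h : IncrementTailBound Z μ M) (hM : 0 ≤ M) :
    HasContinuousModificationOn Z μ unitSquare := by
  classical
  refine ⟨fun p ω => if ∀ᶠ n in atTop, GridRegular (fun q => Z q ω) n ((9 / 10) ^ n)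
    then dyadicLimit (fun q => Z q ω) p else 0, fun p hp => ?_, fun ω => ?_⟩
  · filter_upwards [h.ae_eventually_gridRegular hM, h.ae_tendsto_dyadicProj hM hp]
      with ω hreg htend
    obtain ⟨N, hN⟩ := eventually_atTop.mp hreg
    rw [if_pos hreg]
    exact tendsto_nhds_unique (tendsto_dyadicLimit hN hp) htend
  · by_cases hreg : ∀ᶠ n in atTop, GridRegular (fun q => Z q ω) n ((9 / 10) ^ n)
    · simp only [if_pos hreg]
      exact continuousOn_dyadicLimit hreg
    · simp only [if_neg hreg]
      exact continuousOn_const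

end IncrementTailBound

end

lemma mapsTo_sub_div_Icc {a b : ℝ} (h : a ≤ b) :
    MapsTo (fun x => (x - a) / (b - a)) (Icc a b) (Icc 0 1) := fun x hx =>
  ⟨div_nonneg (by linarith [hx.1]) (by linarith),
    div_le_one_of_le₀ (by linarith [hx.2]) (by linarith)⟩

lemma lineMap_sub_div {a b x : ℝ} (hx : x ∈ Icc a b) :
    AffineMap.lineMap a b ((x - a) / (b - a)) = x := by
  rcases eq_or_ne a b with rfl | hab
  · rw [AffineMap.lineMap_same_apply, hx.1.antisymm hx.2]
  · rw [AffineMap.lineMap_apply_ring', div_mul_cancel₀ _ (sub_ne_zero.2 hab.symm)]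
    ring

lemma sqrt_sq_add_sq_le_abs_add_abs (x y : ℝ) : √(x ^ 2 + y ^ 2) ≤ |x| + |y| := by
  rw [Real.sqrt_le_left (by positivity)]
  nlinarith [sq_abs x, sq_abs y, abs_nonneg x, abs_nonneg y]

lemma sqrt_sq_add_sq_lineMap_le (a₁ b₁ a₂ b₂ : ℝ) (p q : ℝ × ℝ) :
    √((AffineMap.lineMap a₁ b₁ p.1 - AffineMap.lineMap a₁ b₁ q.1) ^ 2 +
        (AffineMap.lineMap a₂ b₂ p.2 - AffineMap.lineMap a₂ b₂ q.2) ^ 2) ≤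
      (dist a₁ b₁ + dist a₂ b₂) * dist p q := by
  refine (sqrt_sq_add_sq_le_abs_add_abs _ _).trans ?_
  rw [← Real.dist_eq, ← Real.dist_eq, dist_lineMap_lineMap, dist_lineMap_lineMap, add_mul,
    mul_comm (dist a₁ b₁), mul_comm (dist a₂ b₂), Prod.dist_eq]
  gcongr
  exacts [le_max_left _ _, le_max_right _ _]

theorem stmt_10_general
    {Ω : Type*} [MeasureSpace Ω]
    (a₁ b₁ a₂ b₂ : ℝ)
    (Y : ℝ × ℝ → Ω → ℝ)
    (hmeas : ∀ p, Measurable (Y p))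
    (C : ℝ) (hC : 0 ≤ C)
    (hgauss : ∀ p ∈ Set.Icc a₁ b₁ ×ˢ Set.Icc a₂ b₂,
      ∀ q ∈ Set.Icc a₁ b₁ ×ˢ Set.Icc a₂ b₂,
        ∃ var : NNReal,
          (var : ℝ) ≤ C * Real.sqrt ((p.1 - q.1) ^ 2 + (p.2 - q.2) ^ 2) ∧
          Measure.map (fun ω => Y p ω - Y q ω) ℙ = gaussianReal 0 var) :
    ∃ Yt : ℝ × ℝ → Ω → ℝ,
      (∀ p ∈ Set.Icc a₁ b₁ ×ˢ Set.Icc a₂ b₂, ∀ᵐ ω, Yt p ω = Y p ω) ∧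
      (∀ ω, ContinuousOn (fun p => Yt p ω) (Set.Icc a₁ b₁ ×ˢ Set.Icc a₂ b₂)) := by
  rcases (Icc a₁ b₁ ×ˢ Icc a₂ b₂).eq_empty_or_nonempty with hT | ⟨_, ⟨hx₁, hx₂⟩⟩
  · exact ⟨Y, by simp [hT], by simp [hT]⟩
  have h₁ : a₁ ≤ b₁ := hx₁.1.trans hx₁.2
  have h₂ : a₂ ≤ b₂ := hx₂.1.trans hx₂.2
  set φ := Prod.map (AffineMap.lineMap (k := ℝ) a₁ b₁) (AffineMap.lineMap (k := ℝ) a₂ b₂)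
  have hφ : MapsTo φ unitSquare (Icc a₁ b₁ ×ˢ Icc a₂ b₂) :=
    ((convex_Icc a₁ b₁).mapsTo_lineMap (left_mem_Icc.2 h₁) (right_mem_Icc.2 h₁)).prodMap
      ((convex_Icc a₂ b₂).mapsTo_lineMap (left_mem_Icc.2 h₂) (right_mem_Icc.2 h₂))
  have hm₆ : 0 ≤ ∫ x, x ^ (2 * 3) ∂gaussianReal 0 1 :=
    integral_nonneg fun x => (even_two_mul 3).pow_nonneg x
  have htail : IncrementTailBound (fun p => Y (φ p)) ℙ
      ((∫ x, x ^ (2 * 3) ∂gaussianReal 0 1) * (C * (dist a₁ b₁ + dist a₂ b₂)) ^ 3) := by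
    intro p hp q hq ε hε
    obtain ⟨v, hv, hlaw⟩ := hgauss _ (hφ hp) _ (hφ hq)
    refine (measure_abs_ge_le_of_map_eq_gaussianReal ((hmeas _).sub (hmeas _)) hlaw 3 hε).trans
      (ENNReal.ofReal_le_ofReal ?_)
    have hv' : (v : ℝ) ≤ C * (dist a₁ b₁ + dist a₂ b₂) * dist p q :=
      hv.trans (by rw [mul_assoc]; gcongr; exact sqrt_sq_add_sq_lineMap_le a₁ b₁ a₂ b₂ p q)
    rw [mul_assoc, mul_div_assoc, mul_div_assoc, ← mul_pow]
    gcongr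
  exact (htail.hasContinuousModificationOn (by positivity)).of_comp
    (by fun_prop) ((mapsTo_sub_div_Icc h₁).prodMap (mapsTo_sub_div_Icc h₂))
    fun q hq => Prod.ext (lineMap_sub_div hq.1) (lineMap_sub_div hq.2)

/-- a Kolmogorov–Čentsov-type criterion: a process on a compact rectangle
`T ⊆ ℝ²` whose increments are centered Gaussian with variance bounded by `C·‖p - q‖`
admits a modification with continuous sample paths. -/
theorem stmt_10
    {Ω : Type*} [MeasureSpace Ω] [IsProbabilityMeasure (ℙ : Measure Ω)]
    (a₁ b₁ a₂ b₂ : ℝ)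
    (Y : ℝ × ℝ → Ω → ℝ)
    (hmeas : ∀ p, Measurable (Y p))
    (C : ℝ) (hC : 0 ≤ C)
    (hgauss : ∀ p ∈ Set.Icc a₁ b₁ ×ˢ Set.Icc a₂ b₂,
      ∀ q ∈ Set.Icc a₁ b₁ ×ˢ Set.Icc a₂ b₂,
        ∃ var : NNReal,
          (var : ℝ) ≤ C * Real.sqrt ((p.1 - q.1) ^ 2 + (p.2 - q.2) ^ 2) ∧
          Measure.map (fun ω => Y p ω - Y q ω) ℙ = gaussianReal 0 var) :
    ∃ Yt : ℝ × ℝ → Ω → ℝ,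
      (∀ p ∈ Set.Icc a₁ b₁ ×ˢ Set.Icc a₂ b₂, ∀ᵐ ω, Yt p ω = Y p ω) ∧
      (∀ ω, ContinuousOn (fun p => Yt p ω) (Set.Icc a₁ b₁ ×ˢ Set.Icc a₂ b₂)) :=
  stmt_10_general a₁ b₁ a₂ b₂ Y hmeas C hC hgauss
end

section
/- Let σ ≥ 0 and let B : [0, ∞) × Ω → ℝ be a jointly measurable stochastic process such that B(s) is square-integrable with E[B(s)] = 0 for every s ≥ 0 and E[B(s)·B(t)] = σ²·min(s, t) for all s, t ≥ 0. Let y* ∈ ℝ and let ν be a finite Borel measure on ℝ with ν((y*, ∞)) = 0. For y ≤ y* define Z(y)(ω) = ∫_{(y, y*]} B(ℓ − y)(ω) dν(ℓ). Then for all y₁, y₂ ≤ y*, Z(y₁) and Z(y₂) are integrable with E[Z(y₁)] = 0 and E[Z(y₁)·Z(y₂)] = σ² ∫_{(y₁, y*]} ∫_{(y₂, y*]} min(ℓ − y₁, k − y₂) dν(ℓ) dν(k). -/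
/-!
Both claims are Fubini's theorem. For `ℓ ∈ (y, y*]` the second moment of `B(ℓ - y)` is
`σ² (ℓ - y) ≤ σ² (y* - y)`, so by `2|ab| ≤ a² + b²` the first absolute moments of `B(ℓ - y)` and
of `B(ℓ - y₁) B(k - y₂)` are bounded uniformly in `ℓ, k`. As `ν` is finite, the integrands
`(ℓ, ω) ↦ B(ℓ - y) ω` and `((ℓ, k), ω) ↦ B(ℓ - y₁) ω B(k - y₂) ω` are then integrable on the
product spaces, so the expectation can be taken inside the `ν`-integrals, where `E[B] = 0` and
`E[B(s) B(t)] = σ² min(s, t)`.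
-/

open MeasureTheory ProbabilityTheory Filter Set

section SquareIntegrable

variable {Ω : Type*} [MeasurableSpace Ω] {P : Measure Ω}

lemma integral_norm_mul_le_of_memLp_two {f g : Ω → ℝ} (hf : MemLp f 2 P) (hg : MemLp g 2 P) :
    ∫ ω, ‖f ω * g ω‖ ∂P ≤ (∫ ω, f ω ^ 2 ∂P + ∫ ω, g ω ^ 2 ∂P) / 2 := by
  have hpointwise (ω : Ω) : ‖f ω * g ω‖ ≤ (f ω ^ 2 + g ω ^ 2) / 2 := by
    rw [Real.norm_eq_abs, abs_mul]
    nlinarith [two_mul_le_add_sq |f ω| |g ω|, sq_abs (f ω), sq_abs (g ω)]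
  calc ∫ ω, ‖f ω * g ω‖ ∂P ≤ ∫ ω, (f ω ^ 2 + g ω ^ 2) / 2 ∂P :=
        integral_mono (hf.integrable_mul hg).norm
          ((hf.integrable_sq.add hg.integrable_sq).div_const 2) hpointwise
    _ = (∫ ω, f ω ^ 2 ∂P + ∫ ω, g ω ^ 2 ∂P) / 2 := by
        rw [integral_div, integral_add hf.integrable_sq hg.integrable_sq]

lemma integral_norm_le_of_memLp_two [IsProbabilityMeasure P] {f : Ω → ℝ} (hf : MemLp f 2 P) :
    ∫ ω, ‖f ω‖ ∂P ≤ (∫ ω, f ω ^ 2 ∂P + 1) / 2 := by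
  simpa using integral_norm_mul_le_of_memLp_two hf (memLp_const (1 : ℝ))

end SquareIntegrable

lemma integrable_prod_of_ae_integral_norm_le {α β : Type*} [MeasurableSpace α]
    [MeasurableSpace β] {μ : Measure α} [IsFiniteMeasure μ] {ν : Measure β} [SFinite ν]
    {f : α × β → ℝ} (hf : AEStronglyMeasurable f (μ.prod ν)) {C : ℝ}
    (hint : ∀ᵐ a ∂μ, Integrable (fun b => f (a, b)) ν)
    (hC : ∀ᵐ a ∂μ, ∫ b, ‖f (a, b)‖ ∂ν ≤ C) :
    Integrable f (μ.prod ν) := by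
  refine (integrable_prod_iff hf).2
    ⟨hint, (integrable_const C).mono' hf.norm.integral_prod_right' ?_⟩
  filter_upwards [hC] with a ha
  rwa [Real.norm_of_nonneg (integral_nonneg fun _ => norm_nonneg _)]

section SecondMoments

variable {α β Ω : Type*} [MeasurableSpace α] [MeasurableSpace β] [MeasurableSpace Ω]

structure IsSqBoundedProcess (X : α → Ω → ℝ) (μ : Measure α) (P : Measure Ω) (C : ℝ) :
    Prop where
  measurable : Measurable (Function.uncurry X)
  memLp_two : ∀ᵐ a ∂μ, MemLp (X a) 2 P
  integral_sq_le : ∀ᵐ a ∂μ, ∫ ω, X a ω ^ 2 ∂P ≤ C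

variable {μ : Measure α} [IsFiniteMeasure μ] {μ' : Measure β} [IsFiniteMeasure μ']
  {P : Measure Ω} [IsProbabilityMeasure P] {X : α → Ω → ℝ} {Y : β → Ω → ℝ}
  {C C' : ℝ}

namespace IsSqBoundedProcess

lemma integrable_uncurry (hX : IsSqBoundedProcess X μ P C) :
    Integrable (Function.uncurry X) (μ.prod P) := by
  refine integrable_prod_of_ae_integral_norm_le hX.measurable.aestronglyMeasurable
    (hX.memLp_two.mono fun a ha => ha.integrable one_le_two) (C := (C + 1) / 2) ?_
  filter_upwards [hX.memLp_two, hX.integral_sq_le] with a ha haC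
  exact (integral_norm_le_of_memLp_two ha).trans (by linarith)

lemma integrable_mul (hX : IsSqBoundedProcess X μ P C) (hY : IsSqBoundedProcess Y μ' P C') :
    Integrable (fun q : (α × β) × Ω => X q.1.1 q.2 * Y q.1.2 q.2) ((μ.prod μ').prod P) := by
  have hXY : ∀ᵐ q ∂μ.prod μ', (MemLp (X q.1) 2 P ∧ ∫ ω, X q.1 ω ^ 2 ∂P ≤ C) ∧
      (MemLp (Y q.2) 2 P ∧ ∫ ω, Y q.2 ω ^ 2 ∂P ≤ C') := by
    filter_upwards [Measure.quasiMeasurePreserving_fst.ae (hX.memLp_two.and hX.integral_sq_le),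
      Measure.quasiMeasurePreserving_snd.ae (hY.memLp_two.and hY.integral_sq_le)] with q hq₁ hq₂
    exact ⟨hq₁, hq₂⟩
  have hmeas : Measurable fun q : (α × β) × Ω => X q.1.1 q.2 * Y q.1.2 q.2 :=
    (hX.measurable.comp ((measurable_fst.comp measurable_fst).prodMk measurable_snd)).mul
      (hY.measurable.comp ((measurable_snd.comp measurable_fst).prodMk measurable_snd))
  refine integrable_prod_of_ae_integral_norm_le hmeas.aestronglyMeasurable
    (hXY.mono fun q hq => hq.1.1.integrable_mul hq.2.1) (C := (C + C') / 2) ?_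
  filter_upwards [hXY] with q ⟨⟨hXq, hXC⟩, hYq, hYC⟩
  linarith [integral_norm_mul_le_of_memLp_two hXq hYq]

lemma integrable_integral (hX : IsSqBoundedProcess X μ P C) :
    Integrable (fun ω => ∫ a, X a ω ∂μ) P :=
  hX.integrable_uncurry.integral_prod_right

lemma integral_integral_comm (hX : IsSqBoundedProcess X μ P C) :
    ∫ ω, ∫ a, X a ω ∂μ ∂P = ∫ a, ∫ ω, X a ω ∂P ∂μ :=
  (integral_integral_swap hX.integrable_uncurry).symm

lemma integral_integral_mul_integral (hX : IsSqBoundedProcess X μ P C)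
    (hY : IsSqBoundedProcess Y μ' P C') :
    ∫ ω, (∫ a, X a ω ∂μ) * (∫ b, Y b ω ∂μ') ∂P =
      ∫ a, ∫ b, ∫ ω, X a ω * Y b ω ∂P ∂μ' ∂μ := by
  have hint := hX.integrable_mul hY
  calc ∫ ω, (∫ a, X a ω ∂μ) * (∫ b, Y b ω ∂μ') ∂P
      = ∫ ω, ∫ q, X q.1 ω * Y q.2 ω ∂μ.prod μ' ∂P := by
        simp_rw [← integral_prod_mul]
    _ = ∫ q, ∫ ω, X q.1 ω * Y q.2 ω ∂P ∂μ.prod μ' := (integral_integral_swap hint).symm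
    _ = ∫ a, ∫ b, ∫ ω, X a ω * Y b ω ∂P ∂μ' ∂μ :=
        integral_prod _ hint.integral_prod_left

end IsSqBoundedProcess

end SecondMoments

lemma isSqBoundedProcess_shift {Ω : Type*} [MeasurableSpace Ω] {P : Measure Ω} {σ : ℝ}
    {B : ℝ → Ω → ℝ} (hBmeas : Measurable (fun p : ℝ × Ω => B p.1 p.2))
    (hB2 : ∀ s : ℝ, 0 ≤ s → Integrable (fun ω => B s ω ^ 2) P)
    (hBvar : ∀ s : ℝ, 0 ≤ s → ∫ ω, B s ω ^ 2 ∂P = σ ^ 2 * s)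
    (ν : Measure ℝ) (y ystar : ℝ) :
    IsSqBoundedProcess (fun ℓ ω => B (ℓ - y) ω) (ν.restrict (Ioc y ystar)) P
      (σ ^ 2 * (ystar - y)) where
  measurable := hBmeas.comp ((measurable_fst.sub measurable_const).prodMk measurable_snd)
  memLp_two := by
    filter_upwards [ae_restrict_mem measurableSet_Ioc] with ℓ hℓ
    have hBℓ : Measurable (B (ℓ - y)) := hBmeas.comp (measurable_const.prodMk measurable_id)
    exact (memLp_two_iff_integrable_sq hBℓ.aestronglyMeasurable).2
      (hB2 _ (sub_nonneg.2 hℓ.1.le))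
  integral_sq_le := by
    filter_upwards [ae_restrict_mem measurableSet_Ioc] with ℓ hℓ
    rw [hBvar _ (sub_nonneg.2 hℓ.1.le)]
    gcongr
    exact hℓ.2

theorem stmt_11_general
    {Ω : Type*} [MeasureSpace Ω] [IsProbabilityMeasure (ℙ : Measure Ω)]
    (σ : ℝ)
    (B : ℝ → Ω → ℝ)
    (hBmeas : Measurable (fun p : ℝ × Ω => B p.1 p.2))
    (hB2 : ∀ s : ℝ, 0 ≤ s → Integrable (fun ω => (B s ω) ^ 2))
    (hBmean : ∀ s : ℝ, 0 ≤ s → (∫ ω, B s ω) = 0)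
    (hBcov : ∀ s t : ℝ, 0 ≤ s → 0 ≤ t →
      (∫ ω, B s ω * B t ω) = σ ^ 2 * min s t)
    (ystar : ℝ) (ν : Measure ℝ) [IsFiniteMeasure ν]
    (Z : ℝ → Ω → ℝ)
    (hZ : ∀ y ω, Z y ω = ∫ ℓ in Set.Ioc y ystar, B (ℓ - y) ω ∂ν) :
    ∀ y₁ y₂ : ℝ, y₁ ≤ ystar → y₂ ≤ ystar →
      Integrable (Z y₁) ∧
      (∫ ω, Z y₁ ω) = 0 ∧
      (∫ ω, Z y₁ ω * Z y₂ ω) =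
        σ ^ 2 * ∫ ℓ in Set.Ioc y₁ ystar,
          (∫ k in Set.Ioc y₂ ystar, min (ℓ - y₁) (k - y₂) ∂ν) ∂ν := by
  intro y₁ y₂ _ _
  have hBvar (s : ℝ) (hs : 0 ≤ s) : ∫ ω, B s ω ^ 2 = σ ^ 2 * s := by
    simpa [sq] using hBcov s s hs hs
  have hX (y : ℝ) := isSqBoundedProcess_shift hBmeas hB2 hBvar ν y ystar
  have hZ_eq (y : ℝ) : Z y = fun ω => ∫ ℓ in Ioc y ystar, B (ℓ - y) ω ∂ν :=
    funext (hZ y)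
  simp only [hZ_eq]
  refine ⟨(hX y₁).integrable_integral, ?_, ?_⟩
  · rw [(hX y₁).integral_integral_comm]
    calc ∫ ℓ in Ioc y₁ ystar, (∫ ω, B (ℓ - y₁) ω) ∂ν
        = ∫ ℓ in Ioc y₁ ystar, (0 : ℝ) ∂ν :=
          setIntegral_congr_fun measurableSet_Ioc fun ℓ hℓ => hBmean _ (sub_nonneg.2 hℓ.1.le)
      _ = 0 := integral_zero _ _
  · rw [(hX y₁).integral_integral_mul_integral (hX y₂), ← integral_const_mul]
    refine setIntegral_congr_fun measurableSet_Ioc fun ℓ hℓ => ?_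
    rw [← integral_const_mul]
    exact setIntegral_congr_fun measurableSet_Ioc fun k hk =>
      hBcov _ _ (sub_nonneg.2 hℓ.1.le) (sub_nonneg.2 hk.1.le)

/-- if `B` is a jointly measurable centered process with
`E[B(s)B(t)] = σ² min(s,t)` and `ν` is a finite measure vanishing on `(y*, ∞)`, then
`Z(y) = ∫_{(y,y*]} B(ℓ - y) dν(ℓ)` is integrable, centered, and
`E[Z(y₁)Z(y₂)] = σ² ∫∫ min(ℓ - y₁, k - y₂) dν dν`. -/
theorem stmt_11
    {Ω : Type*} [MeasureSpace Ω] [IsProbabilityMeasure (ℙ : Measure Ω)]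
    (σ : ℝ) (hσ : 0 ≤ σ)
    (B : ℝ → Ω → ℝ)
    (hBmeas : Measurable (fun p : ℝ × Ω => B p.1 p.2))
    (hB2 : ∀ s : ℝ, 0 ≤ s → Integrable (fun ω => (B s ω) ^ 2))
    (hBmean : ∀ s : ℝ, 0 ≤ s → (∫ ω, B s ω) = 0)
    (hBcov : ∀ s t : ℝ, 0 ≤ s → 0 ≤ t →
      (∫ ω, B s ω * B t ω) = σ ^ 2 * min s t)
    (ystar : ℝ) (ν : Measure ℝ) [IsFiniteMeasure ν]
    (hν : ν (Set.Ioi ystar) = 0)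
    (Z : ℝ → Ω → ℝ)
    (hZ : ∀ y ω, Z y ω = ∫ ℓ in Set.Ioc y ystar, B (ℓ - y) ω ∂ν) :
    ∀ y₁ y₂ : ℝ, y₁ ≤ ystar → y₂ ≤ ystar →
      Integrable (Z y₁) ∧
      (∫ ω, Z y₁ ω) = 0 ∧
      (∫ ω, Z y₁ ω * Z y₂ ω) =
        σ ^ 2 * ∫ ℓ in Set.Ioc y₁ ystar,
          (∫ k in Set.Ioc y₂ ystar, min (ℓ - y₁) (k - y₂) ∂ν) ∂ν :=
  stmt_11_general σ B hBmeas hB2 hBmean hBcov ystar ν Z hZ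
end

section
/- For all real numbers a ≥ 0 and p > 0, ∫_0^∞ y^{−1/2} · exp(−a/(4y) − p·y) dy = √(π/p) · exp(−√(a·p)). -/
/-!
Substituting `y = t²` turns the integral into `2 ∫₀^∞ exp(-a/(4t²) - pt²) dt`, and completing
the square writes the exponent as `-√(ap) - (√p t - √a/(2t))²`. The Cauchy–Schlömilch
substitution `u = qt - c/t` (`q, c > 0`) is a bijection of `(0, ∞)` onto `ℝ`; averaging it with
its composition with the inversion `t ↦ c/(qt)`, which reverses the sign of `u`, shows that
`∫₀^∞ g(qt - c/t) dt = (2q)⁻¹ ∫ g` for every even integrable `g`. With `g u = exp(-u²)` this is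
the Gaussian integral.
-/

open MeasureTheory Set Real

variable {E : Type*} [NormedAddCommGroup E] [NormedSpace ℝ E]

theorem integral_comp_div_Ioi (f : ℝ → E) {k : ℝ} (hk : 0 < k) :
    ∫ s in Ioi 0, (k / s ^ 2) • f (k / s) = ∫ t in Ioi 0, f t := by
  have hderiv : ∀ s ∈ Ioi (0 : ℝ), HasDerivWithinAt (k / ·) (-(k / s ^ 2)) (Ioi 0) s := by
    intro s hs
    simpa [div_eq_mul_inv] using ((hasDerivAt_inv (ne_of_gt hs)).const_mul k).hasDerivWithinAt
  have hinj : InjOn (k / ·) (Ioi (0 : ℝ)) := fun x _ y _ hxy =>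
    inv_injective (mul_left_cancel₀ hk.ne' (by simpa [div_eq_mul_inv] using hxy))
  have himage : (k / ·) '' Ioi (0 : ℝ) = Ioi 0 := by
    refine (image_subset_iff.2 fun s (hs : 0 < s) => div_pos hk hs).antisymm
      fun t (ht : 0 < t) => ?_
    exact ⟨k / t, div_pos hk ht, div_div_cancel₀ hk.ne'⟩
  calc ∫ s in Ioi 0, (k / s ^ 2) • f (k / s)
      = ∫ s in Ioi 0, |-(k / s ^ 2)| • f (k / s) :=
        setIntegral_congr_fun measurableSet_Ioi fun s (hs : 0 < s) => by
          rw [abs_neg, abs_of_pos (by positivity)]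
    _ = ∫ t in (k / ·) '' Ioi 0, f t :=
        (integral_image_eq_integral_abs_deriv_smul measurableSet_Ioi hderiv hinj f).symm
    _ = ∫ t in Ioi 0, f t := by rw [himage]

theorem hasDerivAt_mul_sub_div (q c : ℝ) {t : ℝ} (ht : t ≠ 0) :
    HasDerivAt (fun t => q * t - c / t) (q + c / t ^ 2) t := by
  have hlin : HasDerivAt (fun t => q * t) q t := by simpa using (hasDerivAt_id t).const_mul q
  have hinv : HasDerivAt (fun t => c / t) (-(c / t ^ 2)) t := by
    simpa [div_eq_mul_inv] using (hasDerivAt_inv ht).const_mul c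
  rw [← sub_neg_eq_add]
  exact hlin.sub hinv

section CauchySchlomilch

variable {q c : ℝ}

theorem strictMonoOn_mul_sub_div (hq : 0 < q) (hc : 0 ≤ c) :
    StrictMonoOn (fun t => q * t - c / t) (Ioi 0) := fun x (hx : 0 < x) y _ hxy => by
  have := div_le_div_of_nonneg_left hc hx hxy.le
  have := mul_lt_mul_of_pos_left hxy hq
  dsimp only
  linarith

theorem image_mul_sub_div_Ioi (hq : 0 < q) (hc : 0 < c) :
    (fun t => q * t - c / t) '' Ioi 0 = univ := by
  refine eq_univ_of_forall fun u => ?_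
  -- the positive root of `q t ^ 2 - u t - c = 0`
  set s := √(u ^ 2 + 4 * q * c)
  have hs : s ^ 2 = u ^ 2 + 4 * q * c := sq_sqrt (by positivity)
  have hus : 0 < u + s := by
    have : |u| < s := by rw [← sqrt_sq_eq_abs]; exact sqrt_lt_sqrt (sq_nonneg u) (by nlinarith)
    linarith [neg_le_abs u]
  refine ⟨(u + s) / (2 * q), mem_Ioi.2 (by positivity), ?_⟩
  field_simp
  nlinarith

theorem integral_comp_mul_sub_div_Ioi {g : ℝ → E} (hg : Integrable g) (hg_even : g.Even)
    (hq : 0 < q) (hc : 0 < c) :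
    ∫ t in Ioi 0, g (q * t - c / t) = (2 * q)⁻¹ • ∫ u, g u := by
  set φ : ℝ → ℝ := fun t => q * t - c / t with hφ
  have hderiv : ∀ t ∈ Ioi (0 : ℝ), HasDerivWithinAt φ (q + c / t ^ 2) (Ioi 0) t :=
    fun t ht => (hasDerivAt_mul_sub_div q c (ne_of_gt ht)).hasDerivWithinAt
  have hinj := (strictMonoOn_mul_sub_div hq hc.le).injOn
  have habs : ∀ t ∈ Ioi (0 : ℝ), |q + c / t ^ 2| = q + c / t ^ 2 := fun t _ =>
    abs_of_pos (by positivity)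
  have hchange : ∫ t in Ioi 0, (q + c / t ^ 2) • g (φ t) = ∫ u, g u :=
    calc ∫ t in Ioi 0, (q + c / t ^ 2) • g (φ t)
        = ∫ t in Ioi 0, |q + c / t ^ 2| • g (φ t) :=
          setIntegral_congr_fun measurableSet_Ioi fun t ht => by simp only [habs t ht]
      _ = ∫ u in φ '' Ioi 0, g u :=
          (integral_image_eq_integral_abs_deriv_smul measurableSet_Ioi hderiv hinj g).symm
      _ = ∫ u, g u := by rw [image_mul_sub_div_Ioi hq hc, Measure.restrict_univ]
  have hint_deriv : IntegrableOn (fun t => (q + c / t ^ 2) • g (φ t)) (Ioi 0) := by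
    have := (integrableOn_image_iff_integrableOn_abs_deriv_smul measurableSet_Ioi hderiv hinj
      g).1 (by rw [image_mul_sub_div_Ioi hq hc]; exact hg.integrableOn)
    exact this.congr_fun (fun t ht => by simp only [habs t ht]) measurableSet_Ioi
  have hint_comp : IntegrableOn (fun t => g (φ t)) (Ioi 0) := by
    refine IntegrableOn.congr_fun (hint_deriv.bdd_smul q⁻¹ (φ := fun t => (q + c / t ^ 2)⁻¹)
      (by fun_prop : Measurable fun t : ℝ => (q + c / t ^ 2)⁻¹).aestronglyMeasurable ?_)
      (fun t ht => ?_) measurableSet_Ioi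
    · refine (ae_restrict_iff' measurableSet_Ioi).2 (ae_of_all _ fun t (ht : 0 < t) => ?_)
      rw [norm_inv, Real.norm_of_nonneg (by positivity)]
      exact inv_anti₀ hq (le_add_of_nonneg_right (by positivity))
    · simp only [Pi.smul_apply', smul_smul]
      rw [inv_mul_cancel₀ (by positivity), one_smul]
  -- the inversion `t ↦ c / (q t)` reverses the sign of `φ`
  have hreflect : ∫ t in Ioi 0, (c / t ^ 2) • g (φ t) = q • ∫ t in Ioi 0, g (φ t) := by
    rw [← integral_comp_div_Ioi _ (div_pos hc hq), ← integral_smul]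
    refine setIntegral_congr_fun measurableSet_Ioi fun t (ht : 0 < t) => ?_
    have : φ (c / q / t) = -φ t := by simp only [hφ]; field_simp; ring
    rw [this, hg_even, smul_smul]
    congr 1
    field_simp
  have hint_div : IntegrableOn (fun t => (c / t ^ 2) • g (φ t)) (Ioi 0) :=
    (hint_deriv.sub (hint_comp.smul q)).congr_fun (fun t _ => by simp [add_smul])
      measurableSet_Ioi
  have hsplit : ∫ u, g u = (2 * q) • ∫ t in Ioi 0, g (φ t) := by
    rw [← hchange]
    simp_rw [add_smul]
    rw [integral_add (f := fun t => q • g (φ t)) (hint_comp.smul q) hint_div, hreflect,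
      integral_smul, ← two_smul ℝ, smul_smul]
  rw [hsplit, smul_smul, inv_mul_cancel₀ (by positivity), one_smul]

end CauchySchlomilch

theorem integral_rpow_neg_one_half_smul_Ioi (f : ℝ → E) :
    ∫ y in Ioi 0, y ^ (-(1 : ℝ) / 2) • f y = (2 : ℝ) • ∫ t in Ioi 0, f (t ^ 2) := by
  rw [← integral_comp_rpow_Ioi_of_pos two_pos, ← integral_smul]
  refine setIntegral_congr_fun measurableSet_Ioi fun t (ht : 0 < t) => ?_
  have hsq : t ^ (2 : ℝ) = t ^ 2 := rpow_two t
  have hinv : (t ^ 2) ^ (-(1 : ℝ) / 2) = t⁻¹ := by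
    rw [← rpow_natCast, ← rpow_mul ht.le]; norm_num [rpow_neg_one]
  rw [hsq, smul_smul, hinv]
  congr 1
  norm_num
  field_simp

/-- the Laplace-transform identity
`∫₀^∞ y^{-1/2} exp(-a/(4y) - p y) dy = √(π/p) exp(-√(a p))` for `a ≥ 0`, `p > 0`. -/
theorem stmt_12 (a p : ℝ) (ha : 0 ≤ a) (hp : 0 < p) :
    (∫ y in Set.Ioi (0 : ℝ), y ^ (-(1 : ℝ) / 2) * Real.exp (-a / (4 * y) - p * y)) =
      Real.sqrt (Real.pi / p) * Real.exp (-Real.sqrt (a * p)) := by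
  have hsub := integral_rpow_neg_one_half_smul_Ioi fun y => exp (-a / (4 * y) - p * y)
  simp only [smul_eq_mul] at hsub
  rw [hsub]
  rcases ha.eq_or_lt with rfl | ha
  · simp only [neg_zero, zero_div, zero_sub, zero_mul, sqrt_zero, exp_zero, mul_one, ← neg_mul,
      integral_gaussian_Ioi]
    ring
  · have hgauss : ∫ u, exp (-u ^ 2) = √π := by simpa using integral_gaussian 1
    have hint : Integrable fun u : ℝ => exp (-u ^ 2) := by
      simpa using integrable_exp_neg_mul_sq one_pos
    have heven : (fun u : ℝ => exp (-u ^ 2)).Even := fun u => by simp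
    have hsq : ∀ t ∈ Ioi (0 : ℝ), exp (-a / (4 * t ^ 2) - p * t ^ 2)
        = exp (-√(a * p)) * exp (-(√p * t - √a / 2 / t) ^ 2) := fun t (ht : 0 < t) => by
      rw [← exp_add, sqrt_mul ha.le]
      congr 1
      conv_lhs => rw [← sq_sqrt ha.le, ← sq_sqrt hp.le]
      field_simp
      ring
    rw [setIntegral_congr_fun measurableSet_Ioi hsq, integral_const_mul,
      integral_comp_mul_sub_div_Ioi hint heven (sqrt_pos.2 hp) (by positivity),
      hgauss, sqrt_div pi_pos.le, smul_eq_mul]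
    field_simp
end

section
/- Let f : ℝ → ℝ be continuous, let (fₙ) be a sequence of functions fₙ : ℝ → ℝ with sup_{t ∈ ℝ} |fₙ(t) − f(t)| → 0, and let (yₙ) be a sequence of reals with yₙ → y. Then sup_{t ∈ ℝ} |fₙ(max(yₙ, t)) − f(max(y, t))| → 0 as n → ∞. -/
open Filter

/-- if `fₙ → f` uniformly on ℝ with `f` continuous and `yₙ → y`, then
`sup_t |fₙ(max(yₙ, t)) - f(max(y, t))| → 0`. -/
theorem stmt_19
    (f : ℝ → ℝ) (hf : Continuous f)
    (fn : ℕ → ℝ → ℝ)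
    (hunif : TendstoUniformly fn f Filter.atTop)
    (yn : ℕ → ℝ) (y : ℝ)
    (hy : Filter.Tendsto yn Filter.atTop (nhds y)) :
    TendstoUniformly (fun n t => fn n (max (yn n) t)) (fun t => f (max y t))
      Filter.atTop := by
  rw [Metric.tendstoUniformly_iff]
  intro ε hε
  have hK : IsCompact (Set.Icc (y - 1) (y + 1)) := isCompact_Icc
  have hu : UniformContinuousOn f (Set.Icc (y - 1) (y + 1)) :=
    hK.uniformContinuousOn_of_continuous hf.continuousOn
  rw [Metric.uniformContinuousOn_iff] at hu
  obtain ⟨δ, hδ, hδ'⟩ := hu (ε / 2) (by linarith)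
  have h1 : ∀ᶠ n in atTop, |yn n - y| < min δ 1 := by
    have := Metric.tendsto_nhds.mp hy (min δ 1) (by positivity)
    simpa [Real.dist_eq] using this
  have h2 : ∀ᶠ n in atTop, ∀ x, dist (f x) (fn n x) < ε / 2 :=
    Metric.tendstoUniformly_iff.mp hunif (ε / 2) (by linarith)
  filter_upwards [h1, h2] with n hn1 hn2 x
  have hnδ : |yn n - y| < δ := lt_of_lt_of_le hn1 (min_le_left _ _)
  have hn1' : |yn n - y| < 1 := lt_of_lt_of_le hn1 (min_le_right _ _)
  set u := max (yn n) x with hu_def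
  set v := max y x with hv_def
  have key : dist (f v) (f u) < ε / 2 := by
    by_cases hx : max (yn n) y ≤ x
    · have h1 : u = x := max_eq_right ((le_max_left _ _).trans hx)
      have h2 : v = x := max_eq_right ((le_max_right _ _).trans hx)
      rw [h1, h2]
      simp [dist_self]
      linarith
    · push_neg at hx
      have habs := abs_lt.mp hn1'
      have hmem_u : u ∈ Set.Icc (y - 1) (y + 1) := by
        constructor
        · have : y - 1 ≤ yn n := by linarith [habs.1]
          exact this.trans (le_max_left _ _)
        · have h1 : yn n ≤ y + 1 := by linarith [habs.2]
          have h2 : x ≤ y + 1 := le_of_lt (hx.trans_le (max_le h1 (by linarith)))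
          exact max_le h1 h2
      have hmem_v : v ∈ Set.Icc (y - 1) (y + 1) := by
        constructor
        · exact (by linarith : y - 1 ≤ y).trans (le_max_left _ _)
        · have h1 : yn n ≤ y + 1 := by linarith [habs.2]
          have h2 : x ≤ y + 1 := le_of_lt (hx.trans_le (max_le h1 (by linarith)))
          exact max_le (by linarith) h2
      have hdist : dist v u < δ := by
        rw [Real.dist_eq]
        calc |v - u| ≤ |y - yn n| := by
              simpa [hu_def, hv_def, max_comm] using abs_max_sub_max_le_abs y (yn n) x
          _ = |yn n - y| := abs_sub_comm _ _
          _ < δ := hnδ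
      exact hδ' v hmem_v u hmem_u hdist
  calc dist (f v) (fn n u) ≤ dist (f v) (f u) + dist (f u) (fn n u) := dist_triangle _ _ _
    _ < ε / 2 + ε / 2 := add_lt_add key (hn2 u)
    _ = ε := by ring
end
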